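/- arXiv:2602.05831 — 8 statements merged into one kernel-verified Lean document; each statement's English description precedes it below -/
import Mathlib

section
/- Let S ⊂ ℤ^n be a realizable set and let (Ĝ, Ŵ) be its canonical realization. Then Ĝ is connected. -/
/-- A finite set `S ⊂ ℤ^n` is realizable if: (1) every `x ∈ S` has nonnegative
coordinates with at most one coordinate equal to zero; (2) for every `i` there is
exactly one `x ∈ S` with `x i = 0`; (3) if `x ∈ S` and `x i > 0` then there is
`y ∈ S` with `y i = x i - 1` and `max_j |y j - x j| ≤ 1`. -/
def Realizable {n : ℕ} (S : Finset (Fin n → ℤ)) : Prop :=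
  (∀ x ∈ S, (∀ i, 0 ≤ x i) ∧ ∀ i j, x i = 0 → x j = 0 → i = j) ∧
  (∀ i : Fin n, ∃! x, x ∈ S ∧ x i = 0) ∧
  (∀ x ∈ S, ∀ i : Fin n, 0 < x i →
    ∃ y ∈ S, y i = x i - 1 ∧ ∀ j, |y j - x j| ≤ 1)

/-- `max_{i ∈ [n]} |x i - y i| = 1`. -/
def maxDiffOne {n : ℕ} (x y : Fin n → ℤ) : Prop :=
  (∀ i, |x i - y i| ≤ 1) ∧ ∃ i, |x i - y i| = 1

/-- The canonical realization `Ĝ` of `S`: vertex set `S`, edges `xy` iff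
`max_i |x i - y i| = 1`. -/
def canonicalGraph {n : ℕ} (S : Finset (Fin n → ℤ)) : SimpleGraph {x // x ∈ S} where
  Adj x y := maxDiffOne x.1 y.1
  symm := by
    constructor
    rintro x y ⟨h1, i, hi⟩
    exact ⟨fun j => by rw [abs_sub_comm]; exact h1 j, i, by rwa [abs_sub_comm]⟩
  loopless := by
    constructor
    rintro x ⟨-, i, hi⟩
    simp at hi

/-- `(G, W)` is a realization of `S` (with `V(G) = S`): `G` is connected and for
every `u ∈ S` and every `ω ∈ S` with `ω i = 0` (i.e. `ω = ω^i ∈ W`),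
`d_G(u, ω) = u i`. -/
def IsRealization {n : ℕ} (S : Finset (Fin n → ℤ)) (G : SimpleGraph {x // x ∈ S}) : Prop :=
  G.Connected ∧
  ∀ (u w : {x // x ∈ S}) (i : Fin n), w.1 i = 0 → (G.dist u w : ℤ) = u.1 i

/-!
Fix a coordinate `i`. Axiom (3) lets every vertex step to a neighbour whose `i`-th
coordinate is one smaller, so following such steps from any vertex reaches a vertex
with `i`-th coordinate `0`. By axiom (2) that vertex is the same for every starting
point, so all vertices lie in its component.
-/

namespace canonicalGraph

variable {n : ℕ} {S : Finset (Fin n → ℤ)}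

theorem adj_of_descent {x y : {x // x ∈ S}} {i : Fin n} (hi : y.1 i = x.1 i - 1)
    (hclose : ∀ j, |y.1 j - x.1 j| ≤ 1) : (canonicalGraph S).Adj x y :=
  ⟨fun j => abs_sub_comm (x.1 j) (y.1 j) ▸ hclose j, i, by simp [hi]⟩

theorem exists_reachable_coord_eq_zero (hS : Realizable S) (i : Fin n)
    (x : {x // x ∈ S}) : ∃ w : {x // x ∈ S}, w.1 i = 0 ∧ (canonicalGraph S).Reachable x w := by
  obtain ⟨k, hk⟩ := Int.eq_ofNat_of_zero_le ((hS.1 x.1 x.2).1 i)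
  induction k generalizing x with
  | zero => exact ⟨x, hk, .refl x⟩
  | succ k ih =>
    obtain ⟨y, hyS, hyi, hclose⟩ := hS.2.2 x.1 x.2 i (by omega)
    obtain ⟨w, hw, hyw⟩ := ih ⟨y, hyS⟩ (by simp only [hyi, hk]; omega)
    exact ⟨w, hw, (adj_of_descent (x := x) (y := ⟨y, hyS⟩) hyi hclose).reachable.trans hyw⟩

end canonicalGraph

/-- if `S ⊂ ℤ^n` is realizable then its canonical realization `Ĝ`
is connected. -/
theorem canonicalGraph_connected {n : ℕ} (hn : 0 < n) (S : Finset (Fin n → ℤ))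
    (hS : Realizable S) : (canonicalGraph S).Connected := by
  let i : Fin n := ⟨0, hn⟩
  obtain ⟨w, ⟨hwS, hw⟩, hw_unique⟩ := hS.2.1 i
  have reach_w (u : {x // x ∈ S}) : (canonicalGraph S).Reachable u ⟨w, hwS⟩ := by
    obtain ⟨v, hv, huv⟩ := canonicalGraph.exists_reachable_coord_eq_zero hS i u
    obtain rfl : v = ⟨w, hwS⟩ := Subtype.ext (hw_unique v.1 ⟨v.2, hv⟩)
    exact huv
  have : Nonempty {x // x ∈ S} := ⟨⟨w, hwS⟩⟩
  exact ⟨fun u v => (reach_w u).trans (reach_w v).symm⟩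
end

section
/- Let S ⊂ ℤ^n be a realizable set and (Ĝ, Ŵ) its canonical realization, where Ŵ = {ω^1, …, ω^n} with ω^i the unique element whose i-th coordinate is 0. Then for every x ∈ S and every i ∈ [n], the graph distance d_Ĝ(x, ω^i) equals x_i. -/
/-!
The coordinate `x ↦ x i` changes by at most one along each edge of `Ĝ`, so it is
1-Lipschitz for the graph distance and `d(x, ω^i) ≥ x i - ω^i i = x i`. Conversely,
condition (3) lets us lower the `i`-th coordinate by one along an edge as long as it
is positive; after `x i` steps we reach a vertex whose `i`-th coordinate is zero,
which by condition (2) is `ω^i`.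
-/

namespace SimpleGraph

variable {V : Type*} {G : SimpleGraph V} {f : V → ℤ}

theorem Walk.sub_le_length_of_adj (hf : ∀ ⦃u v⦄, G.Adj u v → |f u - f v| ≤ 1)
    {a b : V} (p : G.Walk a b) : f a - f b ≤ p.length := by
  induction p with
  | nil => simp
  | cons h _ ih =>
    have := (abs_le.mp (hf h)).2
    rw [Walk.length_cons]
    push_cast
    linarith

theorem Reachable.sub_le_dist (hf : ∀ ⦃u v⦄, G.Adj u v → |f u - f v| ≤ 1)
    {a b : V} (h : G.Reachable a b) : f a - f b ≤ G.dist a b := by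
  obtain ⟨p, hp⟩ := h.exists_walk_length_eq_dist
  exact hp ▸ p.sub_le_length_of_adj hf

end SimpleGraph

namespace Realizable

variable {n : ℕ} {S : Finset (Fin n → ℤ)}

theorem coord_nonneg (hS : Realizable S) (x : {v // v ∈ S}) (i : Fin n) : 0 ≤ x.1 i :=
  (hS.1 x.1 x.2).1 i

theorem eq_of_coord_eq_zero (hS : Realizable S) {x w : {v // v ∈ S}} {i : Fin n}
    (hx : x.1 i = 0) (hw : w.1 i = 0) : x = w :=
  Subtype.ext <| (hS.2.1 i).unique ⟨x.2, hx⟩ ⟨w.2, hw⟩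

theorem exists_adj_coord_pred (hS : Realizable S) (x : {v // v ∈ S}) {i : Fin n}
    (hx : 0 < x.1 i) : ∃ y, (canonicalGraph S).Adj x y ∧ y.1 i = x.1 i - 1 := by
  obtain ⟨y, hyS, hyi, hyx⟩ := hS.2.2 x.1 x.2 i hx
  refine ⟨⟨y, hyS⟩, ⟨fun j => abs_sub_comm (x.1 j) (y j) ▸ hyx j, i, ?_⟩, hyi⟩
  change |x.1 i - y i| = 1
  simp [hyi]

theorem exists_walk_length_eq_coord (hS : Realizable S) {w : {v // v ∈ S}} {i : Fin n}
    (hw : w.1 i = 0) (m : ℕ) :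
    ∀ x : {v // v ∈ S}, x.1 i = m → ∃ p : (canonicalGraph S).Walk x w, p.length = m := by
  induction m with
  | zero =>
    intro x hx
    obtain rfl := hS.eq_of_coord_eq_zero (by exact_mod_cast hx) hw
    exact ⟨.nil, rfl⟩
  | succ m ih =>
    intro x hx
    obtain ⟨y, hxy, hy⟩ := hS.exists_adj_coord_pred x (i := i) (by omega)
    obtain ⟨p, hp⟩ := ih y (by omega)
    exact ⟨.cons hxy p, by simp [hp]⟩

end Realizable

/-- in the canonical realization of a realizable set `S`, the
distance from any `x ∈ S` to the vertex `ω^i` (the element of `S` with `i`-th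
coordinate `0`) equals `x i`. -/
theorem canonicalGraph_dist {n : ℕ} (S : Finset (Fin n → ℤ)) (hS : Realizable S)
    (x w : {v // v ∈ S}) (i : Fin n) (hw : w.1 i = 0) :
    ((canonicalGraph S).dist x w : ℤ) = x.1 i := by
  obtain ⟨m, hm⟩ := Int.eq_ofNat_of_zero_le (hS.coord_nonneg x i)
  obtain ⟨p, hp⟩ := hS.exists_walk_length_eq_coord hw m x hm
  have hle : (canonicalGraph S).dist x w ≤ m := hp ▸ SimpleGraph.dist_le p
  have hge : x.1 i - w.1 i ≤ (canonicalGraph S).dist x w :=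
    SimpleGraph.Reachable.sub_le_dist (G := canonicalGraph S) (f := fun v => v.1 i)
      (fun _ _ h => h.1 i) ⟨p⟩
  omega
end

section
/- Let S ⊂ ℤ^n be realizable. All realizations of S are equivalent (i.e., S is uniquely realizable) if and only if for every x, y ∈ S with max_{i∈[n]} |x_i − y_i| = 1 there exists i ∈ [n] such that either (x_i < y_i and {z ∈ D_S(y) : z_i = y_i − 1} = {x}) or (y_i < x_i and {z ∈ D_S(x) : z_i = x_i − 1} = {y}), where D_S(w) = {z ∈ S : max_{i∈[n]} |w_i − z_i| = 1}. -/
/-!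
Every realization `G` lies inside the canonical graph, since `|u i - v i| ≤ d_G(u, v)` by the
triangle inequality through `ω^i`. Conversely, a spanning subgraph of `Ĝ` is a realization exactly
when every `w` with `w i > 0` keeps an edge to some `z` with `z i = w i - 1`: such descents give
walks of length `w i` down to `ω^i`, and no walk along edges of `Ĝ` can be shorter.
So an edge `xy` of `Ĝ` is present in every realization iff it is the only descent of one of its
endpoints in some coordinate; otherwise deleting it from `Ĝ` leaves a second realization.
-/

namespace SimpleGraph

variable {V : Type*} {G : SimpleGraph V} {u w : V}

lemma exists_adj_dist_eq_sub_one (h : G.dist u w ≠ 0) :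
    ∃ z, G.Adj u z ∧ G.dist z w = G.dist u w - 1 := by
  obtain ⟨p, hp⟩ := exists_walk_of_dist_ne_zero h
  cases p with
  | nil => exact (h hp.symm).elim
  | @cons _ z _ hadj q =>
    refine ⟨z, hadj, le_antisymm ?_ ?_⟩
    · have := dist_le q
      rw [Walk.length_cons] at hp
      omega
    · have := q.reachable.dist_triangle_right u
      rw [dist_eq_one_iff_adj.mpr hadj] at this
      omega

end SimpleGraph

open SimpleGraph

section

variable {n : ℕ} {S : Finset (Fin n → ℤ)}

/-- `{z ∈ D_S(y) : z i = y i - 1}`, the descents of `y` in coordinate `i`. -/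
def downNeighbors (S : Finset (Fin n → ℤ)) (y : Fin n → ℤ) (i : Fin n) : Set (Fin n → ℤ) :=
  {z | z ∈ S ∧ maxDiffOne y z ∧ z i = y i - 1}

def HasDescents (H : SimpleGraph {x // x ∈ S}) : Prop :=
  ∀ w : {x // x ∈ S}, ∀ i, 0 < w.1 i → ∃ z, H.Adj w z ∧ z.1 i = w.1 i - 1

lemma apply_lt_of_downNeighbors_eq_singleton {x y : Fin n → ℤ} {i : Fin n}
    (h : downNeighbors S y i = {x}) : x i < y i := by
  have := (h ▸ Set.mem_singleton x : x ∈ downNeighbors S y i).2.2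
  omega

namespace Realizable

variable (hS : Realizable S)
include hS

lemma nonneg {x : Fin n → ℤ} (hx : x ∈ S) (i : Fin n) : 0 ≤ x i :=
  (hS.1 x hx).1 i

lemma eq_of_apply_eq_zero {x y : Fin n → ℤ} {i : Fin n} (hx : x ∈ S) (hy : y ∈ S)
    (hxi : x i = 0) (hyi : y i = 0) : x = y :=
  (hS.2.1 i).unique ⟨hx, hxi⟩ ⟨hy, hyi⟩

lemma downNeighbors_nonempty {x : Fin n → ℤ} {i : Fin n} (hx : x ∈ S) (hi : 0 < x i) :
    (downNeighbors S x i).Nonempty := by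
  obtain ⟨z, hz, hzi, hzx⟩ := hS.2.2 x hx i hi
  exact ⟨z, hz, ⟨fun j => abs_sub_comm (x j) (z j) ▸ hzx j, i, by simp [hzi]⟩, hzi⟩

lemma exists_mem_downNeighbors_ne {x a : Fin n → ℤ} {i : Fin n} (hx : x ∈ S) (hi : 0 < x i)
    (ha : downNeighbors S x i ≠ {a}) : ∃ z ∈ downNeighbors S x i, z ≠ a := by
  by_contra! h
  exact ha ((hS.downNeighbors_nonempty hx hi).subset_singleton_iff.mp h)

end Realizable

lemma abs_sub_le_length {H : SimpleGraph {x // x ∈ S}} (hH : H ≤ canonicalGraph S)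
    {u w : {x // x ∈ S}} (p : H.Walk u w) (i : Fin n) : |u.1 i - w.1 i| ≤ p.length := by
  induction p with
  | nil => simp
  | @cons a b c hab q ih =>
    have := (hH hab).1 i
    have := abs_sub_le (a.1 i) (b.1 i) (c.1 i)
    push_cast [Walk.length_cons]
    linarith

lemma HasDescents.exists_walk_length_eq (hS : Realizable S) {H : SimpleGraph {x // x ∈ S}}
    (hH : HasDescents H) {ω : {x // x ∈ S}} {i : Fin n} (hω : ω.1 i = 0) :
    ∀ (k : ℕ) (u : {x // x ∈ S}), u.1 i = k → ∃ p : H.Walk u ω, p.length = k := by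
  intro k
  induction k with
  | zero =>
    intro u hu
    obtain rfl : u = ω := Subtype.ext (hS.eq_of_apply_eq_zero u.2 ω.2 (by simpa using hu) hω)
    exact ⟨.nil, rfl⟩
  | succ k ih =>
    intro u hu
    obtain ⟨z, hadj, hz⟩ := hH u i (by rw [hu]; positivity)
    obtain ⟨p, hp⟩ := ih z (by rw [hz, hu]; push_cast; ring)
    exact ⟨.cons hadj p, by rw [Walk.length_cons, hp]⟩

lemma isRealization_of_le_of_hasDescents [Nonempty (Fin n)] (hS : Realizable S)
    {H : SimpleGraph {x // x ∈ S}} (hle : H ≤ canonicalGraph S) (hH : HasDescents H) :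
    IsRealization S H := by
  have walk_down (u ω : {x // x ∈ S}) (i : Fin n) (hω : ω.1 i = 0) :
      ∃ p : H.Walk u ω, p.length = (u.1 i).toNat :=
    hH.exists_walk_length_eq hS hω _ u (Int.toNat_of_nonneg (hS.nonneg u.2 i)).symm
  obtain ⟨i₀⟩ := ‹Nonempty (Fin n)›
  obtain ⟨ω₀, ⟨hω₀, hω₀i⟩, -⟩ := hS.2.1 i₀
  have reach (u : {x // x ∈ S}) : H.Reachable u ⟨ω₀, hω₀⟩ :=
    ⟨(walk_down u ⟨ω₀, hω₀⟩ i₀ hω₀i).choose⟩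
  have hconn : H.Connected :=
    { preconnected := fun u v => (reach u).trans (reach v).symm
      nonempty := ⟨⟨ω₀, hω₀⟩⟩ }
  refine ⟨hconn, fun u ω i hω => le_antisymm ?_ ?_⟩
  · obtain ⟨p, hp⟩ := walk_down u ω i hω
    have := hp ▸ dist_le p
    have := hS.nonneg u.2 i
    omega
  · obtain ⟨q, hq⟩ := hconn.exists_walk_length_eq_dist u ω
    have := abs_sub_le_length hle q i
    rwa [hq, hω, sub_zero, abs_of_nonneg (hS.nonneg u.2 i)] at this

namespace IsRealization

variable (hS : Realizable S) {G : SimpleGraph {x // x ∈ S}} (hG : IsRealization S G)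
include hS hG

lemma abs_sub_le_dist (u v : {x // x ∈ S}) (i : Fin n) : |u.1 i - v.1 i| ≤ G.dist u v := by
  obtain ⟨ω, ⟨hω, hωi⟩, -⟩ := hS.2.1 i
  have hu := hG.2 u ⟨ω, hω⟩ i hωi
  have hv := hG.2 v ⟨ω, hω⟩ i hωi
  have huv : G.dist u ⟨ω, hω⟩ ≤ G.dist u v + G.dist v ⟨ω, hω⟩ := hG.1.dist_triangle
  have hvu : G.dist v ⟨ω, hω⟩ ≤ G.dist u v + G.dist u ⟨ω, hω⟩ :=
    dist_comm (u := v) ▸ hG.1.dist_triangle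
  rw [abs_le]
  omega

lemma le_canonicalGraph : G ≤ canonicalGraph S := by
  intro u v huv
  have hbound (i : Fin n) : |u.1 i - v.1 i| ≤ 1 := by
    simpa [dist_eq_one_iff_adj.mpr huv] using hG.abs_sub_le_dist hS u v i
  obtain ⟨i, hi⟩ := Function.ne_iff.mp (Subtype.coe_ne_coe.mpr huv.ne)
  exact ⟨hbound, i, le_antisymm (hbound i) (Int.one_le_abs (sub_ne_zero.mpr hi))⟩

lemma hasDescents : HasDescents G := by
  intro v i hvi
  obtain ⟨ω, ⟨hω, hωi⟩, -⟩ := hS.2.1 i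
  have hv := hG.2 v ⟨ω, hω⟩ i hωi
  obtain ⟨z, hadj, hz⟩ := exists_adj_dist_eq_sub_one (G := G) (u := v) (w := ⟨ω, hω⟩) (by omega)
  have := hG.2 z ⟨ω, hω⟩ i hωi
  exact ⟨z, hadj, by omega⟩

end IsRealization

lemma HasDescents.adj_of_downNeighbors_eq_singleton (hS : Realizable S)
    {G : SimpleGraph {x // x ∈ S}} (hle : G ≤ canonicalGraph S) (hG : HasDescents G)
    {u v : {x // x ∈ S}} {i : Fin n} (h : downNeighbors S v.1 i = {u.1}) : G.Adj v u := by
  have hlt := apply_lt_of_downNeighbors_eq_singleton h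
  obtain ⟨z, hadj, hz⟩ := hG v i (by linarith [hS.nonneg u.2 i])
  have hz_mem : z.1 ∈ downNeighbors S v.1 i := ⟨z.2, hle hadj, hz⟩
  rw [h, Set.mem_singleton_iff] at hz_mem
  rwa [← Subtype.ext hz_mem]

lemma hasDescents_deleteEdges (hS : Realizable S) {x y : {x // x ∈ S}}
    (h : ∀ i, downNeighbors S x.1 i ≠ {y.1} ∧ downNeighbors S y.1 i ≠ {x.1}) :
    HasDescents ((canonicalGraph S).deleteEdges {s(x, y)}) := by
  intro w i hwi
  suffices ∃ z ∈ downNeighbors S w.1 i, ∀ hz : z ∈ S, s(w, ⟨z, hz⟩) ≠ s(x, y) by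
    obtain ⟨z, ⟨hzS, hwz, hzi⟩, hne⟩ := this
    exact ⟨⟨z, hzS⟩, deleteEdges_adj.mpr ⟨hwz, hne hzS⟩, hzi⟩
  by_cases hwx : w = x
  · subst hwx
    obtain ⟨z, hz, hzy⟩ := hS.exists_mem_downNeighbors_ne w.2 hwi (h i).1
    exact ⟨z, hz, fun _ he => hzy (congrArg Subtype.val (Sym2.congr_right.mp he))⟩
  by_cases hwy : w = y
  · subst hwy
    obtain ⟨z, hz, hzx⟩ := hS.exists_mem_downNeighbors_ne w.2 hwi (h i).2
    refine ⟨z, hz, fun hzS he => hzx ?_⟩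
    have : (⟨z, hzS⟩ : {x // x ∈ S}) = x := Sym2.congr_right.mp (he.trans Sym2.eq_swap)
    exact congrArg Subtype.val this
  · obtain ⟨z, hz⟩ := hS.downNeighbors_nonempty w.2 hwi
    refine ⟨z, hz, fun _ he => ?_⟩
    rcases Sym2.mem_iff.mp (he ▸ Sym2.mem_mk_left w _) with h | h
    exacts [hwx h, hwy h]

end

theorem uniquely_realizable_iff_general {n : ℕ} (S : Finset (Fin n → ℤ))
    (hS : Realizable S) :
    (∀ G : SimpleGraph {v // v ∈ S}, IsRealization S G → G = canonicalGraph S) ↔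
      ∀ x ∈ S, ∀ y ∈ S, maxDiffOne x y →
        ∃ i : Fin n,
          (x i < y i ∧ {z : Fin n → ℤ | z ∈ S ∧ maxDiffOne y z ∧ z i = y i - 1} = {x}) ∨
          (y i < x i ∧ {z : Fin n → ℤ | z ∈ S ∧ maxDiffOne x z ∧ z i = x i - 1} = {y}) := by
  constructor
  · intro hunique x hx y hy hxy
    by_contra! hnot
    obtain ⟨i₀, -⟩ := hxy.2
    have : Nonempty (Fin n) := ⟨i₀⟩
    have hadj : (canonicalGraph S).Adj ⟨x, hx⟩ ⟨y, hy⟩ := hxy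
    have hdesc := hasDescents_deleteEdges hS (x := ⟨x, hx⟩) (y := ⟨y, hy⟩) fun i =>
      ⟨fun h => (hnot i).2 (apply_lt_of_downNeighbors_eq_singleton h) h,
        fun h => (hnot i).1 (apply_lt_of_downNeighbors_eq_singleton h) h⟩
    rw [← hunique _ (isRealization_of_le_of_hasDescents hS (deleteEdges_le _) hdesc)] at hadj
    exact (deleteEdges_adj.mp hadj).2 rfl
  · intro hforced G hG
    have hle := hG.le_canonicalGraph hS
    refine le_antisymm hle fun u v huv => ?_
    obtain ⟨i, ⟨-, h⟩ | ⟨-, h⟩⟩ := hforced u.1 u.2 v.1 v.2 huv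
    · exact ((hG.hasDescents hS).adj_of_downNeighbors_eq_singleton hS hle h).symm
    · exact (hG.hasDescents hS).adj_of_downNeighbors_eq_singleton hS hle h

/-- a realizable set `S` is uniquely realizable (every realization
equals the canonical one) iff for all `x, y ∈ S` with `max_i |x i - y i| = 1`
there is a coordinate `i` such that either `x i < y i` and
`{z ∈ D_S(y) : z i = y i - 1} = {x}`, or `y i < x i` and
`{z ∈ D_S(x) : z i = x i - 1} = {y}`, where `D_S(w) = {z ∈ S : maxDiffOne w z}`. -/
theorem uniquely_realizable_iff {n : ℕ} (hn : 0 < n) (S : Finset (Fin n → ℤ))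
    (hS : Realizable S) :
    (∀ G : SimpleGraph {v // v ∈ S}, IsRealization S G → G = canonicalGraph S) ↔
      ∀ x ∈ S, ∀ y ∈ S, maxDiffOne x y →
        ∃ i : Fin n,
          (x i < y i ∧ {z : Fin n → ℤ | z ∈ S ∧ maxDiffOne y z ∧ z i = y i - 1} = {x}) ∨
          (y i < x i ∧ {z : Fin n → ℤ | z ∈ S ∧ maxDiffOne x z ∧ z i = x i - 1} = {y}) :=
  uniquely_realizable_iff_general S hS
end

section
/- Let S ⊂ ℤ^n be a realizable set. There exists a realization (T, W) of S with T a tree if and only if: (i) for every x, y ∈ S with max_{i∈[n]} |x_i − y_i| = 1, we have x_j ≠ y_j for every j ∈ [n]; and (ii) for every x ∈ S₀ and every j ∈ [n] with x_j > 0, there exists exactly one y ∈ S₀ with max_{i∈[n]} |x_i − y_i| = 1 and y_j = x_j − 1. Here S₀ = {x ∈ S : x − (1,…,1) ∉ S}. -/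
namespace SimpleGraph

variable {V : Type*} {G : SimpleGraph V} {u v w : V}

lemma Walk.dist_add_dist_le_length [DecidableEq V] (p : G.Walk u v) {x : V}
    (hx : x ∈ p.support) : G.dist u x + G.dist x v ≤ p.length := by
  calc G.dist u x + G.dist x v ≤ (p.takeUntil x hx).length + (p.dropUntil x hx).length :=
        add_le_add (dist_le _) (dist_le _)
    _ = p.length := by rw [← Walk.length_append, Walk.take_spec]

lemma IsAcyclic.length_eq_dist_of_isPath (hG : G.IsAcyclic) {p : G.Walk u v} (hp : p.IsPath) :
    p.length = G.dist u v := by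
  obtain ⟨q, hq, hql⟩ := p.reachable.exists_path_of_dist
  rwa [← Subtype.mk.inj ((hG.subsingleton_path u v).elim ⟨p, hp⟩ ⟨q, hq⟩)] at hql

lemma Reachable.exists_adj_dist_add_one_eq (hr : G.Reachable u w) (hne : u ≠ w) :
    ∃ v, G.Adj u v ∧ G.dist v w + 1 = G.dist u w := by
  obtain ⟨p, hp⟩ := hr.exists_walk_length_eq_dist
  cases p with
  | nil => exact absurd rfl hne
  | cons h q =>
    refine ⟨_, h, le_antisymm (by simpa [← hp] using dist_le q) ?_⟩
    simpa [dist_eq_one_iff_adj.mpr h, add_comm] using h.reachable.dist_triangle_left w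

/-- In a tree, a path between the two sides of an edge crosses that edge. -/
lemma IsTree.dist_eq_add_of_adj (hG : G.IsTree) {z c d : V} (h : G.Adj u z)
    (hc : G.dist c z < G.dist c u) (hd : G.dist d u < G.dist d z) :
    G.dist c d = G.dist c z + 1 + G.dist u d := by
  classical
  obtain ⟨p, hp, hpl⟩ := hG.connected.exists_path_of_dist c z
  obtain ⟨q, hq, hql⟩ := hG.connected.exists_path_of_dist u d
  have hdisj : ∀ x ∈ p.support, x ∉ q.support := by
    intro x hxp hxq
    have hpx := p.dist_add_dist_le_length hxp
    have hqx := q.dist_add_dist_le_length hxq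
    have hdz := hG.connected.dist_triangle (u := d) (v := x) (w := z)
    have hcu := hG.connected.dist_triangle (u := c) (v := x) (w := u)
    have hx := hG.dist_eq_dist_add_one_of_adj x h
    have hxd : G.dist d x = G.dist x d := dist_comm
    have hux : G.dist u x = G.dist x u := dist_comm
    have hud : G.dist u d = G.dist d u := dist_comm
    omega
  have hpath : (p.append (Walk.cons h.symm q)).IsPath := by
    rw [Walk.isPath_def, Walk.support_append, Walk.support_cons, List.tail_cons,
      List.nodup_append]
    exact ⟨hp.support_nodup, hq.support_nodup, fun x hx y hy hxy => hdisj x hx (hxy ▸ hy)⟩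
  rw [← hG.isAcyclic.length_eq_dist_of_isPath hpath]
  simp [hpl, hql]
  omega

lemma IsAcyclic.eq_of_adj_of_dist_add_one_eq (hG : G.IsAcyclic) {v' : V} (hv : G.Adj u v)
    (hv' : G.Adj u v') (hd : G.dist v w + 1 = G.dist u w) (hd' : G.dist v' w + 1 = G.dist u w) :
    v = v' := by
  have hpath : ∀ x, G.Adj u x → G.dist x w + 1 = G.dist u w →
      ∃ p : G.Walk u w, p.IsPath ∧ p.snd = x := by
    intro x hx hdx
    have hrx : G.Reachable x w := hx.reachable.symm.trans (Reachable.of_dist_ne_zero (by omega))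
    obtain ⟨q, hq⟩ := hrx.exists_walk_length_eq_dist
    exact ⟨.cons hx q, (Walk.cons hx q).isPath_of_length_eq_dist (by simp [hq, hdx]),
      Walk.snd_cons q hx⟩
  obtain ⟨p, hp, rfl⟩ := hpath v hv hd
  obtain ⟨p', hp', rfl⟩ := hpath v' hv' hd'
  rw [Subtype.mk.inj ((hG.subsingleton_path u w).elim ⟨p, hp⟩ ⟨p', hp'⟩)]

lemma isAcyclic_of_lt_adj_subsingleton {α : Type*} [LinearOrder α] (f : V → α)
    (hne : ∀ ⦃a b⦄, G.Adj a b → f a ≠ f b)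
    (huniq : ∀ ⦃a b b'⦄, G.Adj a b → G.Adj a b' → f b < f a → f b' < f a → b = b') :
    G.IsAcyclic := by
  classical
  intro v c hc
  obtain ⟨u, hu, hmax⟩ := c.support.toFinset.exists_max_image f ⟨v, by simp⟩
  rw [List.mem_toFinset] at hu
  have hc' := hc.rotate hu
  have hle : ∀ x ∈ (c.rotate u hu).support, f x ≤ f u := fun x hx =>
    hmax x (List.mem_toFinset.mpr ((c.mem_support_rotate_iff u hu).mp hx))
  have hnil : ¬(c.rotate u hu).Nil := hc'.not_nil
  have hsnd := (c.rotate u hu).adj_snd hnil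
  have hpen := (c.rotate u hu).adj_penultimate hnil
  exact hc'.snd_ne_penultimate (huniq hsnd hpen.symm
    ((hle _ (Walk.getVert_mem_support _ _)).lt_of_ne (hne hsnd).symm)
    ((hle _ (Walk.getVert_mem_support _ _)).lt_of_ne (hne hpen.symm).symm))

lemma Walk.sub_emod_two_eq_length_emod_two {f : V → ℤ}
    (hf : ∀ ⦃a b⦄, G.Adj a b → |f a - f b| = 1) (p : G.Walk u v) :
    (f u - f v) % 2 = p.length % 2 := by
  induction p with
  | nil => simp
  | cons h q ih =>
    have := (abs_eq zero_le_one).mp (hf h)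
    push_cast [Walk.length_cons]
    omega

lemma Walk.le_add_length {f : V → ℕ} (hf : ∀ ⦃a b⦄, G.Adj a b → f a ≤ f b + 1)
    (p : G.Walk u v) : f u ≤ f v + p.length := by
  induction p with
  | nil => simp
  | cons h q ih => grind [hf h, Walk.length_cons]

lemma reachable_and_dist_eq_of_descent {f : V → ℕ} (hf : ∀ ⦃a b⦄, G.Adj a b → f a ≤ f b + 1)
    (hw : ∀ v, f v = 0 ↔ v = w) (hstep : ∀ v, 0 < f v → ∃ v', G.Adj v v' ∧ f v' + 1 = f v)
    (u : V) :
    G.Reachable u w ∧ G.dist u w = f u := by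
  have hwalk : ∀ k u, f u = k → ∃ p : G.Walk u w, p.length = k := by
    intro k
    induction k with
    | zero => intro u hu; exact ⟨(Walk.nil : G.Walk u u).copy rfl ((hw u).mp hu), by simp⟩
    | succ k ih =>
      intro u hu
      obtain ⟨v, huv, hv⟩ := hstep u (by omega)
      obtain ⟨p, hp⟩ := ih v (by omega)
      exact ⟨.cons huv p, by simp [hp]⟩
  obtain ⟨p, hp⟩ := hwalk _ u rfl
  obtain ⟨q, hq⟩ := p.reachable.exists_walk_length_eq_dist
  have := q.le_add_length hf
  have := (hw w).mpr rfl
  exact ⟨p.reachable, le_antisymm (hp ▸ dist_le p) (by omega)⟩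

end SimpleGraph

open SimpleGraph

variable {n : ℕ} {S : Finset (Fin n → ℤ)}

lemma maxDiffOne_comm {x y : Fin n → ℤ} : maxDiffOne x y ↔ maxDiffOne y x := by
  simp only [maxDiffOne, abs_sub_comm (x _)]

def MaxDiffOneDiffersEverywhere (S : Finset (Fin n → ℤ)) : Prop :=
  ∀ x ∈ S, ∀ y ∈ S, maxDiffOne x y → ∀ j, x j ≠ y j

def UniqueDescentInS₀ (S : Finset (Fin n → ℤ)) : Prop :=
  ∀ x ∈ S, (x - 1) ∉ S → ∀ j : Fin n, 0 < x j →
    ∃! y : Fin n → ℤ, (y ∈ S ∧ (y - 1) ∉ S) ∧ maxDiffOne x y ∧ y j = x j - 1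

lemma Realizable.exists_coord_eq_zero (hS : Realizable S) (i : Fin n) :
    ∃ w : {x // x ∈ S}, w.1 i = 0 :=
  let ⟨x, ⟨hx, hxi⟩, _⟩ := hS.2.1 i
  ⟨⟨x, hx⟩, hxi⟩

namespace IsRealization

variable {T : SimpleGraph {x // x ∈ S}}

lemma abs_sub_eq_one_of_adj (hS : Realizable S) (hT : T.IsTree) (hR : IsRealization S T)
    {u v : {x // x ∈ S}} (h : T.Adj u v) (i : Fin n) : |u.1 i - v.1 i| = 1 := by
  obtain ⟨w, hw⟩ := hS.exists_coord_eq_zero i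
  have := hT.dist_eq_dist_add_one_of_adj w h
  rw [dist_comm (u := w), dist_comm (u := w)] at this
  grind [hR.2 u w i hw, hR.2 v w i hw]

lemma eq_of_adj_of_coord_eq_sub_one (hS : Realizable S) (hT : T.IsTree) (hR : IsRealization S T)
    {u v v' : {x // x ∈ S}} (i : Fin n) (hv : T.Adj u v) (hv' : T.Adj u v')
    (hvi : v.1 i = u.1 i - 1) (hv'i : v'.1 i = u.1 i - 1) : v = v' := by
  obtain ⟨w, hw⟩ := hS.exists_coord_eq_zero i
  have hu := hR.2 u w i hw
  have hdv := hR.2 v w i hw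
  have hdv' := hR.2 v' w i hw
  exact hT.isAcyclic.eq_of_adj_of_dist_add_one_eq hv hv' (w := w) (by omega) (by omega)

lemma eq_or_eq_sub_one_of_adj_of_dist (hS : Realizable S) (hT : T.IsTree)
    (hR : IsRealization S T) {u v z : {x // x ∈ S}} (hz : T.Adj u z)
    (hzv : T.dist z v + 1 = T.dist u v) (hle : ∀ i, |u.1 i - v.1 i| ≤ 1) :
    z = v ∨ z.1 = u.1 - 1 := by
  by_contra! ⟨hne, hzu⟩
  obtain ⟨i, hi⟩ := Function.ne_iff.mp hzu
  obtain ⟨w, hw⟩ := hS.exists_coord_eq_zero i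
  have hzi : z.1 i = u.1 i + 1 := by
    have := abs_sub_eq_one_of_adj hS hT hR hz i
    simp only [Pi.sub_apply, Pi.one_apply] at hi
    grind
  have hpos := hT.connected.pos_dist_of_ne hne
  have hu := hR.2 u w i hw
  have hz' := hR.2 z w i hw
  have hv := hR.2 v w i hw
  have hvi := abs_le.mp (hle i)
  have e₁ : T.dist v z = T.dist z v := dist_comm
  have e₂ : T.dist v u = T.dist u v := dist_comm
  have e₃ : T.dist w u = T.dist u w := dist_comm
  have e₄ : T.dist w z = T.dist z w := dist_comm
  -- `v` lies beyond `z` and `w = ω^i` beyond `u`, so the geodesic from `v` to `w` crosses `zu`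
  have hcross := hT.dist_eq_add_of_adj hz (c := v) (d := w) (by omega) (by omega)
  omega

lemma adj_of_forall_abs_sub_le_one (hS : Realizable S) (hT : T.IsTree) (hR : IsRealization S T)
    {u v : {x // x ∈ S}} (hne : u ≠ v) (hle : ∀ i, |u.1 i - v.1 i| ≤ 1)
    (hsub : u.1 - 1 ∈ S → v.1 = u.1 - 1) : T.Adj u v := by
  obtain ⟨z, hz, hzv⟩ := (hT.connected u v).exists_adj_dist_add_one_eq hne
  rcases eq_or_eq_sub_one_of_adj_of_dist hS hT hR hz hzv hle with rfl | hz1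
  · exact hz
  · rwa [show v = z from Subtype.ext ((hsub (hz1 ▸ z.2)).trans hz1.symm)]

lemma maxDiffOneDiffersEverywhere (hS : Realizable S) (hT : T.IsTree) (hR : IsRealization S T) :
    MaxDiffOneDiffersEverywhere S := by
  intro x hx y hy hxy j hj
  obtain ⟨i, hi⟩ := hxy.2
  obtain ⟨p⟩ := hT.connected ⟨x, hx⟩ ⟨y, hy⟩
  have hpar (k : Fin n) := p.sub_emod_two_eq_length_emod_two (f := fun u => u.1 k)
    fun _ _ h => abs_sub_eq_one_of_adj hS hT hR h k
  have hi' := hpar i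
  have hj' := hpar j
  simp only [hj, sub_self] at hi' hj'
  rcases (abs_eq zero_le_one).mp hi with h | h <;> omega

lemma uniqueDescentInS₀ (hS : Realizable S) (hT : T.IsTree) (hR : IsRealization S T) :
    UniqueDescentInS₀ S := by
  intro x hx hx1 j hj
  obtain ⟨w, hw⟩ := hS.exists_coord_eq_zero j
  have hdu : (T.dist ⟨x, hx⟩ w : ℤ) = x j := hR.2 _ w j hw
  obtain ⟨v, huv, hvw⟩ := (hT.connected ⟨x, hx⟩ w).exists_adj_dist_add_one_eq
    (by rintro rfl; exact hj.ne' hw)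
  have hvj : v.1 j = x j - 1 := by have := hR.2 v w j hw; omega
  have hv1 : v.1 - 1 ∉ S := by
    intro hv1
    obtain ⟨i, hi⟩ : ∃ i, v.1 i = x i + 1 := by
      by_contra! h
      have : x - 1 = v.1 := funext fun i => by
        have := abs_sub_eq_one_of_adj hS hT hR huv i
        have := h i
        simp only [Pi.sub_apply, Pi.one_apply]
        grind
      exact hx1 (this ▸ v.2)
    -- `x` and `v - 1` are both neighbours of `v` one step closer to `ω^i`
    have hadj : T.Adj v ⟨v.1 - 1, hv1⟩ := adj_of_forall_abs_sub_le_one hS hT hR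
      (fun h => by
        have := congrArg (·.1 j) h
        simp only [Pi.sub_apply, Pi.one_apply] at this
        omega)
      (fun _ => by simp) (fun _ => rfl)
    have := congrArg (·.1 j) (eq_of_adj_of_coord_eq_sub_one hS hT hR i huv.symm hadj
      (by simp [hi]) (by simp))
    simp only [Pi.sub_apply, Pi.one_apply, hvj] at this
    omega
  refine ⟨v.1, ⟨⟨v.2, hv1⟩, ⟨fun i => (abs_sub_eq_one_of_adj hS hT hR huv i).le, j,
    by simp [hvj]⟩, hvj⟩, ?_⟩
  rintro y ⟨⟨hy, -⟩, hxy, hyj⟩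
  have hadj : T.Adj ⟨x, hx⟩ ⟨y, hy⟩ := adj_of_forall_abs_sub_le_one hS hT hR
    (fun h => by have := congrArg (·.1 j) h; simp only at this; omega) hxy.1
    (fun h => absurd h hx1)
  exact congrArg Subtype.val (eq_of_adj_of_coord_eq_sub_one hS hT hR j hadj huv hyj hvj)

end IsRealization

def treeRealization (S : Finset (Fin n → ℤ)) : SimpleGraph {x // x ∈ S} :=
  fromRel fun u v => v.1 = u.1 - 1 ∨ (u.1 - 1 ∉ S ∧ v.1 - 1 ∉ S ∧ maxDiffOne u.1 v.1)

section treeRealization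

variable {u v : {x // x ∈ S}}

lemma treeRealization_abs_sub_eq_one (hI : MaxDiffOneDiffersEverywhere S)
    (h : (treeRealization S).Adj u v) (i : Fin n) : |u.1 i - v.1 i| = 1 := by
  have hdesc : ∀ a b : {x // x ∈ S},
      b.1 = a.1 - 1 ∨ (a.1 - 1 ∉ S ∧ b.1 - 1 ∉ S ∧ maxDiffOne a.1 b.1) → |a.1 i - b.1 i| = 1 := by
    rintro a b (hab | ⟨-, -, hab⟩)
    · simp [hab]
    · have hle := abs_le.mp (hab.1 i)
      have hne := hI a.1 a.2 b.1 b.2 hab i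
      rw [abs_eq zero_le_one]
      omega
  rcases (fromRel_adj _ u v).mp h with ⟨-, h | h⟩
  · exact hdesc u v h
  · rw [abs_sub_comm]
    exact hdesc v u h

lemma treeRealization_eq_sub_one_or_of_adj_of_lt (h : (treeRealization S).Adj u v) {i : Fin n}
    (hlt : v.1 i < u.1 i) :
    v.1 = u.1 - 1 ∨ (u.1 - 1 ∉ S ∧ v.1 - 1 ∉ S ∧ maxDiffOne u.1 v.1) := by
  rcases (fromRel_adj _ u v).mp h with ⟨-, h | h | ⟨hv, hu, huv⟩⟩
  · exact h
  · have := congrFun h i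
    simp only [Pi.sub_apply, Pi.one_apply] at this
    omega
  · exact Or.inr ⟨hu, hv, maxDiffOne_comm.mp huv⟩

lemma treeRealization_exists_adj (hII : UniqueDescentInS₀ S) {i : Fin n} (hpos : 0 < u.1 i) :
    ∃ v, (treeRealization S).Adj u v ∧ v.1 i = u.1 i - 1 := by
  have hne : ∀ y : {x // x ∈ S}, y.1 i = u.1 i - 1 → u ≠ y := fun y hy h => by
    rw [← h] at hy
    omega
  by_cases hu : u.1 - 1 ∈ S
  · exact ⟨⟨u.1 - 1, hu⟩, (fromRel_adj _ _ _).mpr ⟨hne _ (by simp), Or.inl (Or.inl rfl)⟩,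
      by simp⟩
  · obtain ⟨y, ⟨⟨hy, hy1⟩, huy, hyi⟩, -⟩ := hII u.1 u.2 hu i hpos
    exact ⟨⟨y, hy⟩, (fromRel_adj _ _ _).mpr ⟨hne ⟨y, hy⟩ hyi, Or.inl (Or.inr ⟨hu, hy1, huy⟩)⟩,
      hyi⟩

lemma treeRealization_eq_of_adj_of_lt (hS : Realizable S) (hI : MaxDiffOneDiffersEverywhere S)
    (hII : UniqueDescentInS₀ S) {v' : {x // x ∈ S}} {i : Fin n}
    (hv : (treeRealization S).Adj u v) (hv' : (treeRealization S).Adj u v')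
    (hvi : v.1 i < u.1 i) (hv'i : v'.1 i < u.1 i) : v = v' := by
  have hsub : ∀ y, (treeRealization S).Adj u y → y.1 i < u.1 i → y.1 i = u.1 i - 1 := by
    intro y hy hyi
    have := (abs_eq zero_le_one).mp (treeRealization_abs_sub_eq_one hI hy i)
    omega
  by_cases hu : u.1 - 1 ∈ S
  · have hdown : ∀ y, (treeRealization S).Adj u y → y.1 i < u.1 i → y.1 = u.1 - 1 := by
      intro y hy hyi
      exact (treeRealization_eq_sub_one_or_of_adj_of_lt hy hyi).resolve_right fun h => h.1 hu
    exact Subtype.ext ((hdown v hv hvi).trans (hdown v' hv' hv'i).symm)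
  · have hS₀ : ∀ y, (treeRealization S).Adj u y → y.1 i < u.1 i →
        (y.1 ∈ S ∧ y.1 - 1 ∉ S) ∧ maxDiffOne u.1 y.1 ∧ y.1 i = u.1 i - 1 := by
      intro y hy hyi
      rcases treeRealization_eq_sub_one_or_of_adj_of_lt hy hyi with h | ⟨-, hy1, huy⟩
      · exact absurd (h ▸ y.2) hu
      · exact ⟨⟨y.2, hy1⟩, huy, hsub y hy hyi⟩
    have hpos : 0 < u.1 i := by have := (hS.1 v.1 v.2).1 i; omega
    exact Subtype.ext ((hII u.1 u.2 hu i hpos).unique (hS₀ v hv hvi) (hS₀ v' hv' hv'i))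

lemma treeRealization_reachable_and_dist (hS : Realizable S) (hI : MaxDiffOneDiffersEverywhere S)
    (hII : UniqueDescentInS₀ S) {w : {x // x ∈ S}} {i : Fin n} (hw : w.1 i = 0)
    (u : {x // x ∈ S}) :
    (treeRealization S).Reachable u w ∧ ((treeRealization S).dist u w : ℤ) = u.1 i := by
  have hnonneg (y : {x // x ∈ S}) : 0 ≤ y.1 i := (hS.1 y.1 y.2).1 i
  have hlip : ∀ ⦃a b⦄, (treeRealization S).Adj a b → (a.1 i).toNat ≤ (b.1 i).toNat + 1 := by
    intro a b hab
    have := (abs_eq zero_le_one).mp (treeRealization_abs_sub_eq_one hI hab i)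
    omega
  have hzero (y : {x // x ∈ S}) : (y.1 i).toNat = 0 ↔ y = w := by
    obtain ⟨x, -, hx⟩ := hS.2.1 i
    have := hnonneg y
    exact ⟨fun h => Subtype.ext ((hx y.1 ⟨y.2, by omega⟩).trans (hx w.1 ⟨w.2, hw⟩).symm),
      fun h => by simp [h, hw]⟩
  have hstep (y : {x // x ∈ S}) (hy : 0 < (y.1 i).toNat) :
      ∃ v, (treeRealization S).Adj y v ∧ (v.1 i).toNat + 1 = (y.1 i).toNat := by
    obtain ⟨v, hyv, hvi⟩ := treeRealization_exists_adj hII (u := y) (i := i) (by omega)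
    exact ⟨v, hyv, by have := hnonneg v; omega⟩
  obtain ⟨hr, hd⟩ := reachable_and_dist_eq_of_descent hlip hzero hstep u
  exact ⟨hr, by rw [hd, Int.toNat_of_nonneg (hnonneg u)]⟩

lemma treeRealization_isTree (hn : 0 < n) (hS : Realizable S) (hI : MaxDiffOneDiffersEverywhere S)
    (hII : UniqueDescentInS₀ S) : (treeRealization S).IsTree := by
  let i : Fin n := ⟨0, hn⟩
  obtain ⟨w, hw⟩ := hS.exists_coord_eq_zero i
  have hw_reach (u) := (treeRealization_reachable_and_dist hS hI hII hw u).1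
  refine ⟨(connected_iff _).mpr ⟨fun u v => (hw_reach u).trans (hw_reach v).symm, ⟨w⟩⟩, ?_⟩
  refine isAcyclic_of_lt_adj_subsingleton (fun u => u.1 i) (fun a b hab => ?_)
    (fun a b b' hb hb' hbi hb'i => treeRealization_eq_of_adj_of_lt hS hI hII hb hb' hbi hb'i)
  have := treeRealization_abs_sub_eq_one hI hab i
  grind

end treeRealization

/-- a realizable set `S` admits a realization by a tree iff
(i) whenever `max_i |x i - y i| = 1` all coordinates of `x` and `y` differ, and
(ii) for every `x ∈ S₀` and every `j` with `x j > 0` there is exactly one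
`y ∈ S₀` with `max_i |x i - y i| = 1` and `y j = x j - 1`, where
`S₀ = {x ∈ S : x - (1,…,1) ∉ S}`. -/
theorem tree_realizable_iff {n : ℕ} (hn : 0 < n) (S : Finset (Fin n → ℤ))
    (hS : Realizable S) :
    (∃ T : SimpleGraph {v // v ∈ S}, T.IsTree ∧ IsRealization S T) ↔
      ((∀ x ∈ S, ∀ y ∈ S, maxDiffOne x y → ∀ j, x j ≠ y j) ∧
       (∀ x ∈ S, (x - 1) ∉ S → ∀ j : Fin n, 0 < x j →
          ∃! y : Fin n → ℤ, (y ∈ S ∧ (y - 1) ∉ S) ∧ maxDiffOne x y ∧ y j = x j - 1)) := by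
  constructor
  · rintro ⟨T, hT, hR⟩
    exact ⟨hR.maxDiffOneDiffersEverywhere hS hT, hR.uniqueDescentInS₀ hS hT⟩
  · rintro ⟨hI, hII⟩
    have hT := treeRealization_isTree hn hS hI hII
    exact ⟨treeRealization S, hT, hT.connected,
      fun u w i hw => (treeRealization_reachable_and_dist hS hI hII hw u).2⟩
end

section
/- Let S ⊂ ℤ^n be realizable by a tree. Then S is uniquely realizable (every realization equals the canonical one) if and only if for every pair of distinct elements x, y ∈ S₀* we have max_{i∈[n]} |x_i − y_i| > 1, where S₀* = {x ∈ S : x − (1,…,1) ∉ S and x + (1,…,1) ∈ S}. -/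
/-!
Every coordinate of a realization is a graph distance to a fixed vertex `ωⁱ`, hence changes by
at most one along an edge: every realization is a spanning subgraph of the canonical graph `Ĝ`.
If two distinct points `x, y ∈ S₀*` are at sup-distance one, deleting the edge between `x + 1`
and `y + 1` from `Ĝ` still leaves a realization, because both endpoints can step down along their
own diagonal chains.

Conversely, let `T` be a tree realization and `S₀*` separated. In a tree, a path that moves away
from `ωⁱ` keeps moving away from it, so the tree path between two `Ĝ`-neighbours `p, q` that are
not `T`-neighbours starts by decreasing every coordinate. Hence `p - 1, q - 1 ∈ S`, and by
induction on `p` they are `T`-neighbours. The difference `p - q` is not constant (otherwise `p`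
and `q` would be consecutive on a diagonal chain, hence `T`-neighbours), so `q - 1` lies below
`p - 1` in some coordinate `j`; as a vertex of a tree has only one neighbour closer to `ωʲ`,
`p - 2 ∉ S`. Likewise `q - 2 ∉ S`, so `p - 1, q - 1 ∈ S₀*`, contradicting separation.
Thus `T = Ĝ`, and any realization, being a connected spanning subgraph of the tree `Ĝ`,
equals it.
-/

/-- `x ∈ S₀*` in the paper's notation. -/
def IsChainStart {n : ℕ} (S : Finset (Fin n → ℤ)) (x : Fin n → ℤ) : Prop :=
  x - 1 ∉ S ∧ x + 1 ∈ S

def Separated {n : ℕ} (S : Finset (Fin n → ℤ)) : Prop :=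
  ∀ x ∈ S, ∀ y ∈ S, IsChainStart S x → IsChainStart S y → x ≠ y → ∃ i, 1 < |x i - y i|

def UniquelyRealizable {n : ℕ} (S : Finset (Fin n → ℤ)) : Prop :=
  ∀ G, IsRealization S G → G = canonicalGraph S

namespace SimpleGraph

variable {V : Type*} {T : SimpleGraph V}

theorem IsTree.eq_of_adj_of_dist_add_one_eq (hT : T.IsTree) (w : V) {a b c : V}
    (hb : T.Adj a b) (hc : T.Adj a c) (hdb : T.dist w b + 1 = T.dist w a)
    (hdc : T.dist w c + 1 = T.dist w a) : b = c := by
  classical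
  obtain ⟨q, hq, -⟩ := hT.connected.exists_path_of_dist w a
  suffices key : ∀ c, T.Adj a c → T.dist w c + 1 = T.dist w a → c = q.reverse.snd by
    rw [key b hb hdb, key c hc hdc]
  intro c hc hdc
  obtain ⟨p, hp, hpl⟩ := hT.connected.exists_path_of_dist w c
  have ha : a ∉ p.support := fun ha => by
    have := T.dist_le (p.takeUntil a ha)
    have := p.length_takeUntil_le_length ha
    omega
  have hcq : c ∈ q.support := by
    by_contra hcq
    exact ha (hT.isAcyclic.mem_support_of_ne_mem_support_of_adj_of_isPath hp hq hc.symm hcq)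
  exact hT.isAcyclic.eq_snd_of_adj_start hq.reverse hc (by simpa using hcq)

theorem IsTree.dist_eq_add_length (hT : T.IsTree) (w : V) {p r q : V} (h : T.Adj p r)
    (W : T.Walk r q) (hW : (Walk.cons h W).IsPath) (hpr : T.dist w p + 1 = T.dist w r) :
    T.dist w q = T.dist w r + W.length := by
  induction W generalizing p with
  | nil => simp
  | @cons r s q h' W ih =>
    rw [Walk.cons_isPath_iff] at hW
    have hps : p ≠ s := fun hps => hW.2 (by simp [hps])
    have hrs : T.dist w s = T.dist w r + 1 := by
      rcases hT.dist_eq_dist_add_one_of_adj w h' with hsr | hrs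
      · exact absurd (hT.eq_of_adj_of_dist_add_one_eq w h.symm h' hpr hsr.symm) hps
      · exact hrs
    rw [ih h' hW.1 hrs.symm, hrs, Walk.length_cons]
    ring

end SimpleGraph

section Realization

variable {n : ℕ} {S : Finset (Fin n → ℤ)}

theorem maxDiffOne_iff {x y : Fin n → ℤ} : maxDiffOne x y ↔ x ≠ y ∧ ∀ i, |x i - y i| ≤ 1 := by
  refine ⟨fun ⟨hle, i, hi⟩ => ⟨fun hxy => by simp [hxy] at hi, hle⟩, fun ⟨hne, hle⟩ => ?_⟩
  obtain ⟨i, hi⟩ := Function.ne_iff.mp hne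
  refine ⟨hle, i, le_antisymm (hle i) ?_⟩
  exact Int.one_le_abs (sub_ne_zero.mpr hi)

theorem canonicalGraph_adj_iff {u v : {x // x ∈ S}} :
    (canonicalGraph S).Adj u v ↔ u ≠ v ∧ ∀ i, |u.1 i - v.1 i| ≤ 1 :=
  maxDiffOne_iff.trans (and_congr_left' Subtype.coe_ne_coe)

theorem IsRealization.exists_root (hS : Realizable S) {G : SimpleGraph {x // x ∈ S}}
    (hG : IsRealization S G) (i : Fin n) : ∃ w, ∀ u, (G.dist w u : ℤ) = u.1 i := by
  obtain ⟨w, ⟨hw, hwi⟩, -⟩ := hS.2.1 i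
  exact ⟨⟨w, hw⟩, fun u => SimpleGraph.dist_comm (G := G) ▸ hG.2 u ⟨w, hw⟩ i hwi⟩

theorem IsRealization.le_canonicalGraph_s12 (hS : Realizable S) {G : SimpleGraph {x // x ∈ S}}
    (hG : IsRealization S G) : G ≤ canonicalGraph S := by
  intro u v huv
  refine canonicalGraph_adj_iff.mpr ⟨huv.ne, fun i => ?_⟩
  obtain ⟨w, hw⟩ := hG.exists_root hS i
  rw [← hw u, ← hw v, abs_le]
  rcases huv.diff_dist_adj (u := w) with h | h | h <;> omega

end Realization

section Descent

variable {n : ℕ} {S : Finset (Fin n → ℤ)} {G : SimpleGraph {x // x ∈ S}}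

theorem abs_coord_sub_le_length (hlip : ∀ a b, G.Adj a b → ∀ i, |a.1 i - b.1 i| ≤ 1)
    {u v : {x // x ∈ S}} (W : G.Walk u v) (i : Fin n) : |u.1 i - v.1 i| ≤ W.length := by
  induction W with
  | nil => simp
  | @cons a b c h W ih =>
    have := abs_sub_le (a.1 i) (b.1 i) (c.1 i)
    have := hlip a b h i
    push_cast [SimpleGraph.Walk.length_cons]
    omega

theorem exists_walk_length_eq_coord (hS : Realizable S)
    (hstep : ∀ z i, 0 < z.1 i → ∃ z', G.Adj z z' ∧ z'.1 i = z.1 i - 1)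
    (i : Fin n) (u : {x // x ∈ S}) :
    ∃ (w : {x // x ∈ S}) (W : G.Walk u w), w.1 i = 0 ∧ (W.length : ℤ) = u.1 i := by
  obtain ⟨k, hk⟩ := Int.eq_ofNat_of_zero_le ((hS.1 u.1 u.2).1 i)
  induction k generalizing u with
  | zero => exact ⟨u, .nil, hk, by simp [hk]⟩
  | succ k ih =>
    obtain ⟨z, huz, hz⟩ := hstep u i (by omega)
    obtain ⟨w, W, hw, hW⟩ := ih z (by omega)
    exact ⟨w, .cons huz W, hw, by push_cast [SimpleGraph.Walk.length_cons]; omega⟩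

theorem isRealization_of_descent (hS : Realizable S) (i₀ : Fin n)
    (hlip : ∀ a b, G.Adj a b → ∀ i, |a.1 i - b.1 i| ≤ 1)
    (hstep : ∀ z i, 0 < z.1 i → ∃ z', G.Adj z z' ∧ z'.1 i = z.1 i - 1) :
    IsRealization S G := by
  have root_eq : ∀ i {w w' : {x // x ∈ S}}, w.1 i = 0 → w'.1 i = 0 → w = w' :=
    fun i w w' hw hw' => Subtype.ext ((hS.2.1 i).unique ⟨w.2, hw⟩ ⟨w'.2, hw'⟩)
  have hconn : G.Connected := by
    obtain ⟨w, ⟨hw, -⟩, -⟩ := hS.2.1 i₀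
    have : Nonempty {x // x ∈ S} := ⟨⟨w, hw⟩⟩
    refine ⟨fun u v => ?_⟩
    obtain ⟨w, U, hw, -⟩ := exists_walk_length_eq_coord hS hstep i₀ u
    obtain ⟨w', V, hw', -⟩ := exists_walk_length_eq_coord hS hstep i₀ v
    cases root_eq i₀ hw hw'
    exact ⟨U.append V.reverse⟩
  refine ⟨hconn, fun u w i hw => le_antisymm ?_ ?_⟩
  · obtain ⟨w', W, hw', hW⟩ := exists_walk_length_eq_coord hS hstep i u
    cases root_eq i hw' hw
    exact hW ▸ Nat.cast_le.mpr (SimpleGraph.dist_le W)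
  · obtain ⟨W, hW⟩ := hconn.exists_walk_length_eq_dist u w
    have := abs_coord_sub_le_length hlip W i
    rw [hW, hw, sub_zero] at this
    exact (le_abs_self _).trans this

end Descent

namespace IsRealization

variable {n : ℕ} {S : Finset (Fin n → ℤ)} {T : SimpleGraph {x // x ∈ S}}

theorem coord_eq_of_adj_of_isTree (hS : Realizable S) (hT : T.IsTree) (hTr : IsRealization S T)
    {a b : {x // x ∈ S}} (hab : T.Adj a b) (i : Fin n) :
    b.1 i = a.1 i + 1 ∨ b.1 i = a.1 i - 1 := by
  obtain ⟨w, hw⟩ := hTr.exists_root hS i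
  rw [← hw a, ← hw b]
  rcases hT.dist_eq_dist_add_one_of_adj w hab with h | h <;> omega

theorem eq_of_adj_of_isTree (hS : Realizable S) (hT : T.IsTree) (hTr : IsRealization S T)
    {a b c : {x // x ∈ S}} (hab : T.Adj a b) (hac : T.Adj a c) {i : Fin n}
    (hb : b.1 i = a.1 i - 1) (hc : c.1 i = a.1 i - 1) : b = c := by
  obtain ⟨w, hw⟩ := hTr.exists_root hS i
  have ha := hw a
  exact hT.eq_of_adj_of_dist_add_one_eq w hab hac (by have := hw b; omega)
    (by have := hw c; omega)

theorem exists_adj_eq_sub_one_of_isTree (hS : Realizable S) (hT : T.IsTree)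
    (hTr : IsRealization S T) {p q : {x // x ∈ S}} (hne : p ≠ q) (hpq : ¬T.Adj p q)
    (hle : ∀ i, |p.1 i - q.1 i| ≤ 1) : ∃ r, T.Adj p r ∧ r.1 = p.1 - 1 := by
  obtain ⟨W, hW, -⟩ := (hT.connected p q).exists_path_of_dist
  cases W with
  | nil => exact absurd rfl hne
  | @cons _ r _ h W =>
    refine ⟨r, h, funext fun i => ?_⟩
    have hlen : W.length ≠ 0 := fun h0 => hpq (W.eq_of_length_eq_zero h0 ▸ h)
    rcases hTr.coord_eq_of_adj_of_isTree hS hT h i with hup | hdown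
    · exfalso
      obtain ⟨w, hw⟩ := hTr.exists_root hS i
      have hq := hT.dist_eq_add_length w h W hW (by have := hw p; have := hw r; omega)
      have := hw q
      have := hw r
      have := abs_le.mp (hle i)
      omega
    · simpa using hdown

theorem adj_of_eq_sub_one_of_isTree (hS : Realizable S) (hT : T.IsTree)
    (hTr : IsRealization S T) {z z' : {x // x ∈ S}} (hne : z ≠ z') (h : z'.1 = z.1 - 1) :
    T.Adj z z' := by
  by_contra hzz'
  obtain ⟨r, hzr, hr⟩ := hTr.exists_adj_eq_sub_one_of_isTree hS hT hne hzz' (fun i => by simp [h])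
  exact hzz' (Subtype.ext (hr.trans h.symm) ▸ hzr)

theorem sub_one_notMem_of_isTree (hS : Realizable S) (hT : T.IsTree) (hTr : IsRealization S T)
    {a b : {x // x ∈ S}} (hab : T.Adj a b) {i j : Fin n} (hi : b.1 i = a.1 i - 1)
    (hj : b.1 j = a.1 j + 1) : a.1 - 1 ∉ S := by
  intro ha
  have hne : a ≠ ⟨a.1 - 1, ha⟩ := fun h => by have := congrArg (·.1 j) h; simp at this; omega
  have hb := congrArg (·.1 j) <| hTr.eq_of_adj_of_isTree hS hT hab
    (hTr.adj_of_eq_sub_one_of_isTree hS hT hne rfl) hi (by simp)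
  simp only [Pi.sub_apply, Pi.one_apply] at hb
  omega

theorem isChainStart_of_adj_of_not_adj_add_one (hS : Realizable S) (hT : T.IsTree)
    (hTr : IsRealization S T) {p q r s : {x // x ∈ S}} (hpq : ¬T.Adj p q)
    (hr : r.1 = p.1 - 1) (hs : s.1 = q.1 - 1) (hrs : T.Adj r s) :
    IsChainStart S r.1 ∧ IsChainStart S s.1 := by
  have hne : p ≠ q := fun h => hrs.ne (Subtype.ext (by rw [hr, hs, h]))
  have hcoord := hTr.coord_eq_of_adj_of_isTree hS hT hrs
  obtain ⟨j₁, hj₁⟩ : ∃ j, s.1 j = r.1 j - 1 := by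
    by_contra! hup
    refine hpq (hTr.adj_of_eq_sub_one_of_isTree hS hT hne.symm (funext fun j => ?_)).symm
    have hrj := congrFun hr j
    have hsj := congrFun hs j
    have := hup j
    have := hcoord j
    simp only [Pi.sub_apply, Pi.one_apply] at hrj hsj ⊢
    omega
  obtain ⟨j₂, hj₂⟩ : ∃ j, s.1 j = r.1 j + 1 := by
    by_contra! hdown
    refine hpq (hTr.adj_of_eq_sub_one_of_isTree hS hT hne (funext fun j => ?_))
    have hrj := congrFun hr j
    have hsj := congrFun hs j
    have := hdown j
    have := hcoord j
    simp only [Pi.sub_apply, Pi.one_apply] at hrj hsj ⊢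
    omega
  exact ⟨⟨hTr.sub_one_notMem_of_isTree hS hT hrs hj₁ hj₂, by simp [hr]⟩,
    ⟨hTr.sub_one_notMem_of_isTree hS hT hrs.symm (i := j₂) (j := j₁) (by omega) (by omega),
      by simp [hs]⟩⟩

theorem adj_of_separated (hS : Realizable S) (hT : T.IsTree) (hTr : IsRealization S T)
    (hsep : Separated S) {p q : {x // x ∈ S}} (hne : p ≠ q) (hle : ∀ i, |p.1 i - q.1 i| ≤ 1) :
    T.Adj p q := by
  obtain ⟨i, -⟩ := Function.ne_iff.mp (Subtype.coe_ne_coe.mpr hne)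
  obtain ⟨k, hk⟩ := Int.eq_ofNat_of_zero_le ((hS.1 p.1 p.2).1 i)
  induction k using Nat.strong_induction_on generalizing p q with
  | _ k ih =>
  by_contra hpq
  obtain ⟨r, -, hr⟩ := hTr.exists_adj_eq_sub_one_of_isTree hS hT hne hpq hle
  obtain ⟨s, -, hs⟩ := hTr.exists_adj_eq_sub_one_of_isTree hS hT hne.symm (hpq ∘ .symm)
    (fun i => abs_sub_comm (p.1 i) (q.1 i) ▸ hle i)
  have hdiff : ∀ j, r.1 j - s.1 j = p.1 j - q.1 j := fun j => by
    simp only [hr, hs, Pi.sub_apply, Pi.one_apply]; ring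
  have hri : r.1 i = k - 1 := by simp [hr, hk]
  have hk₁ : 1 ≤ k := by have := (hS.1 r.1 r.2).1 i; omega
  have hrs : T.Adj r s := by
    refine ih (k - 1) (by omega) (fun hrs => hne (Subtype.ext (funext fun j => ?_)))
      (fun j => hdiff j ▸ hle j) (by omega)
    have := hdiff j
    rw [hrs] at this
    omega
  obtain ⟨hr₀, hs₀⟩ := hTr.isChainStart_of_adj_of_not_adj_add_one hS hT hpq hr hs hrs
  obtain ⟨j, hj⟩ := hsep r.1 r.2 s.1 s.2 hr₀ hs₀ (Subtype.coe_ne_coe.mpr hrs.ne)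
  exact absurd (hdiff j ▸ hle j) (not_le.mpr hj)

theorem eq_canonicalGraph_of_separated (hS : Realizable S) (hT : T.IsTree)
    (hTr : IsRealization S T) (hsep : Separated S) : T = canonicalGraph S :=
  le_antisymm (hTr.le_canonicalGraph_s12 hS) fun _ _ huv =>
    hTr.adj_of_separated hS hT hsep (canonicalGraph_adj_iff.mp huv).1
      (canonicalGraph_adj_iff.mp huv).2

end IsRealization

section Forward

variable {n : ℕ} {S : Finset (Fin n → ℤ)}

theorem exists_canonicalGraph_adj_coord_sub_one (hS : Realizable S) (z : {x // x ∈ S})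
    {i : Fin n} (hzi : 0 < z.1 i) :
    ∃ z', (canonicalGraph S).Adj z z' ∧ z'.1 i = z.1 i - 1 := by
  obtain ⟨z', hz'S, hz'i, hz'⟩ := hS.2.2 z.1 z.2 i hzi
  refine ⟨⟨z', hz'S⟩, canonicalGraph_adj_iff.mpr ⟨fun h => ?_, fun j => ?_⟩, hz'i⟩
  · have := congrArg (fun v : {x // x ∈ S} => v.1 i) h
    simp only at this
    omega
  · rw [abs_sub_comm]
    exact hz' j

theorem UniquelyRealizable.separated (hS : Realizable S) (hu : UniquelyRealizable S) :
    Separated S := by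
  intro x hx y hy hx₀ hy₀ hxy
  by_contra! hclose
  obtain ⟨i₀, -⟩ := Function.ne_iff.mp hxy
  set X : {v // v ∈ S} := ⟨x + 1, hx₀.2⟩
  set Y : {v // v ∈ S} := ⟨y + 1, hy₀.2⟩
  have hXY : (canonicalGraph S).Adj X Y := canonicalGraph_adj_iff.mpr
    ⟨fun h => hxy (by simpa [X, Y] using congrArg Subtype.val h),
      fun i => by simpa [X, Y] using hclose i⟩
  have hoff : ∀ z : {v // v ∈ S}, (z.1 = x ∨ z.1 = y) → z ≠ X ∧ z ≠ Y := by
    have succ_ne : ∀ v : Fin n → ℤ, v + 1 ≠ v := fun v h => by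
      simpa using congrFun h i₀
    rintro z (hz | hz) <;> refine ⟨fun h => ?_, fun h => ?_⟩ <;>
      have hzv := congrArg Subtype.val h <;> simp only [X, Y, hz] at hzv
    · exact succ_ne x hzv.symm
    · exact hx₀.1 (by simpa [hzv] using hy)
    · exact hy₀.1 (by simpa [hzv] using hx)
    · exact succ_ne y hzv.symm
  let G := (canonicalGraph S).deleteEdges {s(X, Y)}
  have hGadj : ∀ a b, (canonicalGraph S).Adj a b → (a ≠ X ∧ a ≠ Y ∨ b ≠ X ∧ b ≠ Y) →
      G.Adj a b := by
    intro a b hab hne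
    refine SimpleGraph.deleteEdges_adj.mpr ⟨hab, ?_⟩
    simp only [Set.mem_singleton_iff, Sym2.eq_iff]
    tauto
  have hG : IsRealization S G := by
    refine isRealization_of_descent hS i₀ (fun a b hab i => (canonicalGraph_adj_iff.mp hab.1).2 i)
      fun z i hzi => ?_
    by_cases hz : z = X ∨ z = Y
    · rcases hz with rfl | rfl
      · exact ⟨⟨x, hx⟩, hGadj _ _ (canonicalGraph_adj_iff.mpr
          ⟨(hoff _ (Or.inl rfl)).1.symm, fun j => by simp [X]⟩) (Or.inr (hoff _ (Or.inl rfl))),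
          by simp [X]⟩
      · exact ⟨⟨y, hy⟩, hGadj _ _ (canonicalGraph_adj_iff.mpr
          ⟨(hoff _ (Or.inr rfl)).2.symm, fun j => by simp [Y]⟩) (Or.inr (hoff _ (Or.inr rfl))),
          by simp [Y]⟩
    · obtain ⟨z', hzz', hz'⟩ := exists_canonicalGraph_adj_coord_sub_one hS z hzi
      exact ⟨z', hGadj _ _ hzz' (Or.inl (not_or.mp hz)), hz'⟩
  have hGXY : ¬G.Adj X Y := by simp [G]
  exact hGXY (hu G hG ▸ hXY)

end Forward

/-- if `S` is realizable by a tree, then `S` is uniquely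
realizable iff any two distinct elements of
`S₀* = {x ∈ S : x - 1 ∉ S ∧ x + 1 ∈ S}` satisfy `max_i |x i - y i| > 1`. -/
theorem tree_uniquely_realizable_iff {n : ℕ} (S : Finset (Fin n → ℤ))
    (hS : Realizable S)
    (htree : ∃ T : SimpleGraph {v // v ∈ S}, T.IsTree ∧ IsRealization S T) :
    (∀ G : SimpleGraph {v // v ∈ S}, IsRealization S G → G = canonicalGraph S) ↔
      ∀ x ∈ S, ∀ y ∈ S, ((x - 1) ∉ S ∧ (x + 1) ∈ S) → ((y - 1) ∉ S ∧ (y + 1) ∈ S) →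
        x ≠ y → ∃ i : Fin n, 1 < |x i - y i| := by
  obtain ⟨T, hT, hTr⟩ := htree
  refine ⟨UniquelyRealizable.separated hS, fun hsep G hG => ?_⟩
  have hTc := hTr.eq_canonicalGraph_of_separated hS hT hsep
  rw [← hTc]
  exact (SimpleGraph.isTree_iff_minimal_connected.mp hT).eq_of_le hG.1
    (hTc ▸ hG.le_canonicalGraph_s12 hS)
end

section
/- Let S ⊂ ℤ^n be realizable satisfying: (i) for all x, y ∈ S with max_i |x_i − y_i| = 1, x_j ≠ y_j for all j; (ii) for every x ∈ S₀ and every j with x_j > 0 there is exactly one y ∈ S₀ with max_i |x_i − y_i| = 1 and y_j = x_j − 1, where S₀ = {x ∈ S : x − 1 ∉ S}. Then the subgraph of the canonical realization Ĝ induced by S₀ is a tree, and moreover induced distances agree: d_{Ĝ[S₀]}(x, y) = d_Ĝ(x, y) for all x, y ∈ S₀. -/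
namespace SimpleGraph

variable {V : Type*} {G : SimpleGraph V}

structure IsUniqueDescent (G : SimpleGraph V) (h : V → ℤ) : Prop where
  eq_add_one_or_eq_sub_one : ∀ ⦃u v⦄, G.Adj u v → h v = h u + 1 ∨ h v = h u - 1
  eq_of_adj_of_eq_sub_one : ∀ ⦃u v w⦄, G.Adj u v → G.Adj u w →
    h v = h u - 1 → h w = h u - 1 → v = w

theorem IsUniqueDescent.eq_add_length_of_isTrail {h : V → ℤ} (hh : G.IsUniqueDescent h)
    {c a b : V} (hca : G.Adj c a) (hup : h a = h c + 1) (p : G.Walk a b) (hp : p.IsTrail)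
    (hc : s(c, a) ∉ p.edges) : h b = h a + p.length := by
  induction p generalizing c with
  | nil => simp
  | @cons a u b hau q ih =>
    rw [Walk.isTrail_cons] at hp
    have hcu : c ≠ u := by
      rintro rfl
      exact hc (by simp [Sym2.eq_swap])
    have hu : h u = h a + 1 := by
      refine (hh.eq_add_one_or_eq_sub_one hau).resolve_right fun hdown => hcu ?_
      exact hh.eq_of_adj_of_eq_sub_one hca.symm hau (by omega) hdown
    rw [ih hau hu hp.1 hp.2, Walk.length_cons]
    push_cast
    omega

section Family

variable {ι : Type*} {h : ι → V → ℤ}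

theorem Walk.IsTrail.exists_length_eq_sub (hh : ∀ i, G.IsUniqueDescent (h i))
    (hup : ∀ ⦃u v⦄, G.Adj u v → ∃ i, h i v = h i u + 1)
    {a b : V} {p : G.Walk a b} (hp : p.IsTrail) (hab : a ≠ b) :
    ∃ i, (p.length : ℤ) = h i b - h i a := by
  cases p with
  | nil => exact absurd rfl hab
  | cons hau q =>
    obtain ⟨i, hi⟩ := hup hau
    rw [Walk.isTrail_cons] at hp
    refine ⟨i, ?_⟩
    rw [(hh i).eq_add_length_of_isTrail hau hi q hp.1 hp.2, Walk.length_cons]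
    push_cast
    omega

theorem isAcyclic_of_isUniqueDescent (hh : ∀ i, G.IsUniqueDescent (h i))
    (hup : ∀ ⦃u v⦄, G.Adj u v → ∃ i, h i v = h i u + 1) : G.IsAcyclic := by
  intro v c hc
  cases c with
  | nil => exact hc.ne_nil rfl
  | cons hvu p =>
    obtain ⟨i, hi⟩ := hup hvu
    have hp := (Walk.isTrail_cons _ _).mp hc.isTrail
    have := (hh i).eq_add_length_of_isTrail hvu hi p hp.1 hp.2
    omega

end Family

theorem exists_reachable_of_exists_adj_sub_one {h : V → ℤ} (hnonneg : ∀ v, 0 ≤ h v)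
    (hdesc : ∀ v, 0 < h v → ∃ u, G.Adj v u ∧ h u = h v - 1) (v : V) :
    ∃ r, h r = 0 ∧ G.Reachable v r := by
  obtain ⟨m, hm⟩ := Int.eq_ofNat_of_zero_le (hnonneg v)
  induction m generalizing v with
  | zero => exact ⟨v, hm, .rfl⟩
  | succ m ih =>
    obtain ⟨u, hvu, hu⟩ := hdesc v (by omega)
    obtain ⟨r, hr, hur⟩ := ih u (by omega)
    exact ⟨r, hr, hvu.reachable.trans hur⟩

theorem connected_of_exists_adj_sub_one {h : V → ℤ} (hnonneg : ∀ v, 0 ≤ h v)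
    (hdesc : ∀ v, 0 < h v → ∃ u, G.Adj v u ∧ h u = h v - 1)
    {r : V} (huniq : ∀ v, h v = 0 → v = r) : G.Connected := by
  refine (connected_iff_exists_forall_reachable G).mpr ⟨r, fun v => ?_⟩
  obtain ⟨r', hr', hvr'⟩ := exists_reachable_of_exists_adj_sub_one hnonneg hdesc v
  exact huniq r' hr' ▸ hvr'.symm

theorem Walk.abs_sub_le_length {f : V → ℤ} (hf : ∀ ⦃u v⦄, G.Adj u v → |f u - f v| ≤ 1)
    {a b : V} (p : G.Walk a b) : |f a - f b| ≤ p.length := by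
  induction p with
  | nil => simp
  | @cons u v w huv q ih =>
    rw [Walk.length_cons]
    push_cast
    calc |f u - f w| ≤ |f u - f v| + |f v - f w| := abs_sub_le _ _ _
      _ ≤ _ := by linarith [hf huv]

theorem Reachable.abs_sub_le_dist {f : V → ℤ}
    (hf : ∀ ⦃u v⦄, G.Adj u v → |f u - f v| ≤ 1) {a b : V} (hab : G.Reachable a b) :
    |f a - f b| ≤ G.dist a b := by
  obtain ⟨p, hp⟩ := hab.exists_walk_length_eq_dist
  exact hp ▸ p.abs_sub_le_length hf

theorem Reachable.dist_map_le {W : Type*} {G' : SimpleGraph W} (f : G →g G') {a b : V}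
    (hab : G.Reachable a b) : G'.dist (f a) (f b) ≤ G.dist a b := by
  obtain ⟨p, hp⟩ := hab.exists_walk_length_eq_dist
  exact hp ▸ (p.length_map f) ▸ dist_le (p.map f)

end SimpleGraph

open SimpleGraph

variable {n : ℕ} {S : Finset (Fin n → ℤ)}

abbrev S₀ (S : Finset (Fin n → ℤ)) : Set {x // x ∈ S} := {x | x.1 - 1 ∉ S}

def EdgesChangeAllCoords (S : Finset (Fin n → ℤ)) : Prop :=
  ∀ x ∈ S, ∀ y ∈ S, maxDiffOne x y → ∀ j, x j ≠ y j

def HasUniqueLowerNeighbourInS₀ (S : Finset (Fin n → ℤ)) : Prop :=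
  ∀ x ∈ S, (x - 1) ∉ S → ∀ j : Fin n, 0 < x j →
    ∃! y : Fin n → ℤ, (y ∈ S ∧ (y - 1) ∉ S) ∧ maxDiffOne x y ∧ y j = x j - 1

theorem sub_one_notMem_of_apply_eq_zero (hS : Realizable S) {w : Fin n → ℤ} {i : Fin n}
    (h0 : w i = 0) : w - 1 ∉ S := fun hmem => by
  have := (hS.1 _ hmem).1 i
  simp only [Pi.sub_apply, Pi.one_apply, h0] at this
  omega

theorem canonicalGraph_adj_apply (hi : EdgesChangeAllCoords S)
    {x y : {v // v ∈ S}} (hxy : (canonicalGraph S).Adj x y) (k : Fin n) :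
    y.1 k = x.1 k + 1 ∨ y.1 k = x.1 k - 1 := by
  have hle := abs_le.mp (hxy.1 k)
  have hne := hi x.1 x.2 y.1 y.2 hxy k
  omega

theorem isUniqueDescent_induce_S₀ (hS : Realizable S) (hi : EdgesChangeAllCoords S)
    (hii : HasUniqueLowerNeighbourInS₀ S) (k : Fin n) :
    ((canonicalGraph S).induce (S₀ S)).IsUniqueDescent (fun x => x.1.1 k) where
  eq_add_one_or_eq_sub_one _ _ huv := canonicalGraph_adj_apply hi huv k
  eq_of_adj_of_eq_sub_one u v w huv huw hv hw := by
    have hpos : 0 < u.1.1 k := by linarith [(hS.1 _ v.1.2).1 k]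
    have hvw := (hii u.1.1 u.1.2 u.2 k hpos).unique ⟨⟨v.1.2, v.2⟩, huv, hv⟩
      ⟨⟨w.1.2, w.2⟩, huw, hw⟩
    exact Subtype.ext (Subtype.ext hvw)

theorem exists_apply_eq_add_one_of_adj_induce_S₀ (hi : EdgesChangeAllCoords S) ⦃u v : S₀ S⦄
    (huv : ((canonicalGraph S).induce (S₀ S)).Adj u v) :
    ∃ k, v.1.1 k = u.1.1 k + 1 := by
  by_contra! hdown
  have hv : v.1.1 = u.1.1 - 1 := funext fun k =>
    (canonicalGraph_adj_apply hi huv k).resolve_left (hdown k)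
  exact u.2 (hv ▸ v.1.2)

theorem connected_induce_S₀ (hn : 0 < n) (hS : Realizable S)
    (hii : HasUniqueLowerNeighbourInS₀ S) :
    ((canonicalGraph S).induce (S₀ S)).Connected := by
  let i : Fin n := ⟨0, hn⟩
  obtain ⟨w, ⟨hwS, hw0⟩, hwuniq⟩ := hS.2.1 i
  let r : S₀ S := ⟨⟨w, hwS⟩, sub_one_notMem_of_apply_eq_zero hS hw0⟩
  refine connected_of_exists_adj_sub_one (h := fun x => x.1.1 i) (r := r)
    (fun x => (hS.1 _ x.1.2).1 i) (fun x hx => ?_)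
    (fun x hx => Subtype.ext (Subtype.ext (hwuniq _ ⟨x.1.2, hx⟩)))
  obtain ⟨y, ⟨⟨hyS, hy⟩, hxy, hyi⟩, -⟩ := hii x.1.1 x.1.2 x.2 i hx
  exact ⟨⟨⟨y, hyS⟩, hy⟩, hxy, hyi⟩

/-- under conditions (i) and (ii) of the tree characterization,
the subgraph of the canonical realization induced by `S₀ = {x ∈ S : x - 1 ∉ S}`
is a tree, and distances in it agree with distances in `Ĝ`. -/
theorem induced_S0_tree {n : ℕ} (hn : 0 < n) (S : Finset (Fin n → ℤ))
    (hS : Realizable S)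
    (hi : ∀ x ∈ S, ∀ y ∈ S, maxDiffOne x y → ∀ j, x j ≠ y j)
    (hii : ∀ x ∈ S, (x - 1) ∉ S → ∀ j : Fin n, 0 < x j →
      ∃! y : Fin n → ℤ, (y ∈ S ∧ (y - 1) ∉ S) ∧ maxDiffOne x y ∧ y j = x j - 1) :
    ((canonicalGraph S).induce {x : {v // v ∈ S} | (x.1 - 1) ∉ S}).IsTree ∧
    ∀ x y : {x : {v // v ∈ S} | (x.1 - 1) ∉ S},
      ((canonicalGraph S).induce {x : {v // v ∈ S} | (x.1 - 1) ∉ S}).dist x y =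
        (canonicalGraph S).dist x.1 y.1 := by
  have hdesc := isUniqueDescent_induce_S₀ hS hi hii
  have hup := exists_apply_eq_add_one_of_adj_induce_S₀ (S := S) hi
  have hconn := connected_induce_S₀ hn hS hii
  refine ⟨⟨hconn, isAcyclic_of_isUniqueDescent hdesc hup⟩, fun x y => le_antisymm ?_ ?_⟩
  · rcases eq_or_ne x y with rfl | hxy
    · simp
    obtain ⟨p, hp, hlen⟩ := hconn.exists_path_of_dist x y
    obtain ⟨i, hpi⟩ := hp.isTrail.exists_length_eq_sub hdesc hup hxy
    have hreach : (canonicalGraph S).Reachable x.1 y.1 :=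
      (hconn x y).map (Embedding.induce (S₀ S)).toHom
    have hle : (p.length : ℤ) ≤ (canonicalGraph S).dist x.1 y.1 :=
      calc (p.length : ℤ) = y.1.1 i - x.1.1 i := hpi
        _ ≤ |x.1.1 i - y.1.1 i| := abs_sub_comm (x.1.1 i) _ ▸ le_abs_self _
        _ ≤ _ := hreach.abs_sub_le_dist fun _ _ (huv : maxDiffOne _ _) => huv.1 i
    exact hlen ▸ Nat.cast_le.mp hle
  · exact (hconn x y).dist_map_le (Embedding.induce (S₀ S)).toHom
end

section
/- Let S ⊂ ℤ^n be realizable and satisfy conditions (i) and (ii) of the tree characterization (with S₀ = {x ∈ S : x − 1 ∉ S}, S₁ = S \ S₀). Define the graph T with V(T) = S and E(T) = E(Ĝ[S₀]) ∪ {{y, y − 1} : y ∈ S₁}. Then |E(T)| = |S| − 1 and T is connected, hence T is a tree. -/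
/-- The graph `T` with `V(T) = S` and
`E(T) = E(Ĝ[S₀]) ∪ {{y, y - 1} : y ∈ S₁}`, where `S₀ = {x ∈ S : x - 1 ∉ S}` and
`S₁ = S \ S₀`. (The conjunct `a ≠ b` is redundant for `n ≥ 1`.) -/
def treeCandidate {n : ℕ} (S : Finset (Fin n → ℤ)) : SimpleGraph {x // x ∈ S} where
  Adj a b := a ≠ b ∧
    (((a.1 - 1) ∉ S ∧ (b.1 - 1) ∉ S ∧ maxDiffOne a.1 b.1) ∨
      b.1 = a.1 - 1 ∨ a.1 = b.1 - 1)
  symm := by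
    constructor
    rintro a b ⟨hab, h | h | h⟩
    · exact ⟨hab.symm, Or.inl ⟨h.2.1, h.1, (canonicalGraph S).adj_symm (u := a) (v := b) h.2.2⟩⟩
    · exact ⟨hab.symm, Or.inr (Or.inr h)⟩
    · exact ⟨hab.symm, Or.inr (Or.inl h)⟩
  loopless := ⟨fun a h => h.1 rfl⟩

/-!
Grade `S` by the first coordinate. By (i), every edge of `T` changes each coordinate by exactly
one, and by (ii) every vertex other than the unique point with first coordinate `0` has exactly one
`T`-neighbour one level lower: the point `v - 1` when it lies in `S`, and otherwise the unique
`y ∈ S₀` that (ii) provides. A graph in which every non-root vertex has a unique lower neighbour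
is connected, and its edges correspond bijectively to the non-root vertices, so it is a tree.
-/

namespace SimpleGraph

variable {V : Type*} {G : SimpleGraph V} {h : V → ℕ} {r : V}

theorem reachable_of_forall_exists_adj_lower
    (hlower : ∀ v, v ≠ r → ∃ w, G.Adj v w ∧ h w + 1 = h v) (v : V) : G.Reachable v r := by
  induction hv : h v generalizing v with
  | zero =>
    by_contra hvr
    obtain ⟨w, -, hw⟩ := hlower v (fun hv => hvr (hv ▸ Reachable.refl v))
    omega
  | succ k ih =>
    by_cases hvr : v = r
    · exact hvr ▸ Reachable.refl v
    obtain ⟨w, hvw, hw⟩ := hlower v hvr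
    exact hvw.reachable.trans (ih w (by omega))

theorem connected_of_forall_exists_adj_lower
    (hlower : ∀ v, v ≠ r → ∃ w, G.Adj v w ∧ h w + 1 = h v) : G.Connected :=
  haveI : Nonempty V := ⟨r⟩
  Connected.mk fun u v =>
    (reachable_of_forall_exists_adj_lower hlower u).trans
      (reachable_of_forall_exists_adj_lower hlower v).symm

theorem natCard_edgeSet_add_one_of_existsUnique_adj_lower [Finite V] (hr : h r = 0)
    (hstep : ∀ a b, G.Adj a b → h a = h b + 1 ∨ h b = h a + 1)
    (hlower : ∀ v, v ≠ r → ∃! w, G.Adj v w ∧ h w + 1 = h v) :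
    Nat.card G.edgeSet + 1 = Nat.card V := by
  choose p hp hp_unique using hlower
  let f : {v // v ≠ r} → G.edgeSet := fun v => ⟨s(v.1, p v.1 v.2), (hp v.1 v.2).1⟩
  have hf : Function.Bijective f := by
    constructor
    · rintro ⟨v, hv⟩ ⟨w, hw⟩ hvw
      rcases Sym2.eq_iff.mp (congrArg Subtype.val hvw) with ⟨rfl, -⟩ | ⟨hvpw, hpvw⟩
      · rfl
      · dsimp only at hvpw hpvw
        have hv_lower := (hp v hv).2
        have hw_lower := (hp w hw).2
        rw [hpvw] at hv_lower
        rw [← hvpw] at hw_lower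
        omega
    · rintro ⟨e, he⟩
      induction e using Sym2.inductionOn with
      | hf a b =>
        rcases hstep a b he with hab | hba
        · have ha : a ≠ r := by rintro rfl; omega
          exact ⟨⟨a, ha⟩, Subtype.ext (by simp [f, ← hp_unique a ha b ⟨he, hab.symm⟩])⟩
        · have hb : b ≠ r := by rintro rfl; omega
          exact ⟨⟨b, hb⟩, Subtype.ext (by
            simp [f, ← hp_unique b hb a ⟨he.symm, hba.symm⟩, Sym2.eq_swap])⟩
  have := Fintype.ofFinite V
  classical
  have hV : 0 < Fintype.card V := Fintype.card_pos_iff.2 ⟨r⟩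
  rw [← Nat.card_eq_of_bijective f hf, Nat.card_eq_fintype_card, Nat.card_eq_fintype_card,
    Fintype.card_subtype_compl, Fintype.card_subtype_eq]
  omega

theorem isTree_of_existsUnique_adj_lower [Finite V] (hr : h r = 0)
    (hstep : ∀ a b, G.Adj a b → h a = h b + 1 ∨ h b = h a + 1)
    (hlower : ∀ v, v ≠ r → ∃! w, G.Adj v w ∧ h w + 1 = h v) : G.IsTree :=
  isTree_iff_connected_and_card.mpr
    ⟨connected_of_forall_exists_adj_lower fun v hv => (hlower v hv).exists,
      natCard_edgeSet_add_one_of_existsUnique_adj_lower hr hstep hlower⟩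

end SimpleGraph

section treeCandidate

variable {n : ℕ} {S : Finset (Fin n → ℤ)}

theorem treeCandidate_adj_apply_eq_add_one_or
    (hi : ∀ x ∈ S, ∀ y ∈ S, maxDiffOne x y → ∀ j, x j ≠ y j)
    {a b : {x // x ∈ S}} (hab : (treeCandidate S).Adj a b) (j : Fin n) :
    a.1 j = b.1 j + 1 ∨ b.1 j = a.1 j + 1 := by
  rcases hab with ⟨-, ⟨-, -, hmax⟩ | hba | hab⟩
  · have hle := abs_le.mp (hmax.1 j)
    have hne := hi a.1 a.2 b.1 b.2 hmax j
    omega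
  · simp [hba]
  · simp [hab]

theorem treeCandidate_existsUnique_adj_apply_sub_one
    (hii : ∀ x ∈ S, (x - 1) ∉ S → ∀ j : Fin n, 0 < x j →
      ∃! y : Fin n → ℤ, (y ∈ S ∧ (y - 1) ∉ S) ∧ maxDiffOne x y ∧ y j = x j - 1)
    (v : {x // x ∈ S}) {j : Fin n} (hv : 0 < v.1 j) :
    ∃! w : {x // x ∈ S}, (treeCandidate S).Adj v w ∧ w.1 j = v.1 j - 1 := by
  have hne : ∀ w : {x // x ∈ S}, w.1 j = v.1 j - 1 → v ≠ w := by
    rintro w hw rfl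
    omega
  have hv_ne_sub_one : ∀ w : {x // x ∈ S}, w.1 j = v.1 j - 1 → v.1 ≠ w.1 - 1 := by
    intro w hw hvw
    have := congrFun hvw j
    simp only [Pi.sub_apply, Pi.one_apply] at this
    omega
  by_cases hv1 : v.1 - 1 ∈ S
  · refine ⟨⟨v.1 - 1, hv1⟩, ⟨⟨hne _ (by simp), Or.inr (Or.inl rfl)⟩, by simp⟩, ?_⟩
    rintro w ⟨⟨-, ⟨hv1', -⟩ | hw | hw⟩, hwj⟩
    · exact absurd hv1 hv1'
    · exact Subtype.ext hw
    · exact absurd hw (hv_ne_sub_one w hwj)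
  · obtain ⟨y, ⟨⟨hyS, hy1⟩, hmax, hyj⟩, hy_unique⟩ := hii v.1 v.2 hv1 j hv
    refine ⟨⟨y, hyS⟩, ⟨⟨hne ⟨y, hyS⟩ hyj, Or.inl ⟨hv1, hy1, hmax⟩⟩, hyj⟩, ?_⟩
    rintro w ⟨⟨-, ⟨-, hw1, hmax'⟩ | hw | hw⟩, hwj⟩
    · exact Subtype.ext (hy_unique w.1 ⟨⟨w.2, hw1⟩, hmax', hwj⟩)
    · exact absurd (hw ▸ w.2) hv1
    · exact absurd hw (hv_ne_sub_one w hwj)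

end treeCandidate

/-- under conditions (i) and (ii) of the tree characterization,
the graph `T` has `|S| - 1` edges and is connected, hence is a tree. -/
theorem treeCandidate_isTree {n : ℕ} (hn : 0 < n) (S : Finset (Fin n → ℤ))
    (hS : Realizable S)
    (hi : ∀ x ∈ S, ∀ y ∈ S, maxDiffOne x y → ∀ j, x j ≠ y j)
    (hii : ∀ x ∈ S, (x - 1) ∉ S → ∀ j : Fin n, 0 < x j →
      ∃! y : Fin n → ℤ, (y ∈ S ∧ (y - 1) ∉ S) ∧ maxDiffOne x y ∧ y j = x j - 1) :
    (treeCandidate S).edgeSet.ncard = S.card - 1 ∧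
    (treeCandidate S).Connected ∧ (treeCandidate S).IsTree := by
  obtain ⟨hnonneg, hzero, -⟩ := hS
  let j : Fin n := ⟨0, hn⟩
  obtain ⟨r, ⟨hrS, hrj⟩, hr_unique⟩ := hzero j
  have hj_nonneg (v : {x // x ∈ S}) : 0 ≤ v.1 j := (hnonneg v.1 v.2).1 j
  have hpos (v : {x // x ∈ S}) (hv : v ≠ ⟨r, hrS⟩) : 0 < v.1 j :=
    (hj_nonneg v).lt_of_ne fun h => hv (Subtype.ext (hr_unique v.1 ⟨v.2, h.symm⟩))
  have htree : (treeCandidate S).IsTree :=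
    SimpleGraph.isTree_of_existsUnique_adj_lower (h := fun v => (v.1 j).toNat) (r := ⟨r, hrS⟩)
      (by simp [hrj])
      (fun a b hab => by
        have := treeCandidate_adj_apply_eq_add_one_or hi hab j
        have := hj_nonneg a
        have := hj_nonneg b
        omega)
      (fun v hv => (existsUnique_congr fun w => and_congr_right' (by
        have := hj_nonneg v
        have := hj_nonneg w
        omega)).mp (treeCandidate_existsUnique_adj_apply_sub_one hii v (hpos v hv)))
  have hcard := (SimpleGraph.isTree_iff_connected_and_card.mp htree).2
  rw [Nat.card_eq_finsetCard] at hcard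
  refine ⟨?_, htree.connected, htree⟩
  rw [← Nat.card_coe_set_eq]
  omega
end

section
/- In the 3SAT reduction of the BMETREL hardness proof, the bipartite graph G₀ with parts V₁ = {x_1,…,x_n, x̄_1,…,x̄_n} and V₂ = {r_1,…,r_n, c_1,…,c_m, s, t}, and edges r_i x_i, r_i x̄_i, s l and t l for all literals l, and c_j l for l ∈ C_j, realizes the constructed distance-vector set S with resolving set W = {r_1,…,r_n, c_1,…,c_m, s}: i.e., for every vertex u of G₀ its distance vector with respect to W equals the prescribed vector δ(·, u). -/
/-- Vertices of the graph `G₀` of the 3SAT reduction: literals `(i, b)`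
(variables `x_i` and negations `x̄_i`), together with `r_i` (`i ∈ [n]`),
`c_j` (`j ∈ [m]`), and `s`, `t` (encoded as `false`, `true`). -/
abbrev RedVtx (n m : ℕ) : Type := (Fin n × Bool) ⊕ (Fin n ⊕ (Fin m ⊕ Bool))

/-- Coordinate indices: one for each `r_i`, each `c_j`, and one for `s`. -/
abbrev RedIdx (n m : ℕ) : Type := Fin n ⊕ (Fin m ⊕ Unit)

/-- The vertex of `W = {r_1,…,r_n, c_1,…,c_m, s}` carrying each coordinate. -/
def redW {n m : ℕ} : RedIdx n m → RedVtx n m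
  | Sum.inl i => Sum.inr (Sum.inl i)
  | Sum.inr (Sum.inl j) => Sum.inr (Sum.inr (Sum.inl j))
  | Sum.inr (Sum.inr _) => Sum.inr (Sum.inr (Sum.inr false))

/-- The prescribed distance table `δ(w, u)` of the reduction, for `w ∈ W`. -/
def redDelta {n m : ℕ} (C : Fin m → Finset (Fin n × Bool)) :
    RedIdx n m → RedVtx n m → ℕ
  | Sum.inl i, Sum.inl l => if l.1 = i then 1 else 3
  | Sum.inl i, Sum.inr (Sum.inl p) => if p = i then 0 else 4
  | Sum.inl i, Sum.inr (Sum.inr (Sum.inl j)) =>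
      if i ∈ (C j).image Prod.fst then 2 else 4
  | Sum.inl _, Sum.inr (Sum.inr (Sum.inr _)) => 2
  | Sum.inr (Sum.inl j), Sum.inl l => if l ∈ C j then 1 else 3
  | Sum.inr (Sum.inl j), Sum.inr (Sum.inl i) =>
      if i ∈ (C j).image Prod.fst then 2 else 4
  | Sum.inr (Sum.inl j), Sum.inr (Sum.inr (Sum.inl p)) =>
      if p = j then 0 else if (C j ∩ C p).Nonempty then 2 else 4
  | Sum.inr (Sum.inl _), Sum.inr (Sum.inr (Sum.inr _)) => 2
  | Sum.inr (Sum.inr _), Sum.inl _ => 1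
  | Sum.inr (Sum.inr _), Sum.inr (Sum.inl _) => 2
  | Sum.inr (Sum.inr _), Sum.inr (Sum.inr (Sum.inl _)) => 2
  | Sum.inr (Sum.inr _), Sum.inr (Sum.inr (Sum.inr b)) => if b then 2 else 0

/-- Half of the adjacency of `G₀`: a literal `l` is joined to `r_i` iff `l` is a
literal of variable `i`, to `c_j` iff `l ∈ C_j`, and to both `s` and `t`. -/
def redE {n m : ℕ} (C : Fin m → Finset (Fin n × Bool)) :
    RedVtx n m → RedVtx n m → Prop
  | Sum.inl l, Sum.inr (Sum.inl i) => l.1 = i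
  | Sum.inl l, Sum.inr (Sum.inr (Sum.inl j)) => l ∈ C j
  | Sum.inl _, Sum.inr (Sum.inr (Sum.inr _)) => True
  | _, _ => False

/-- The bipartite graph `G₀` of the 3SAT reduction. -/
def redGraph {n m : ℕ} (C : Fin m → Finset (Fin n × Bool)) :
    SimpleGraph (RedVtx n m) where
  Adj u v := redE C u v ∨ redE C v u
  symm := ⟨fun _ _ h => h.symm⟩
  loopless := ⟨by
    rintro (l | (i | (j | b))) (h | h) <;> simp [redE] at h⟩


/-! For `w ∈ W`, the prescribed column `δ(w, ·)` changes by at most one along every edge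
of `G₀` and vanishes at `w`, so it bounds the distance to `w` from below. Conversely every
entry is attained: entries `1` and `2` by an edge or a common literal neighbour, and the
generic entries `3` and `4` by walks through `s`, which is adjacent to every literal. -/

theorem SimpleGraph.Walk.le_add_length_s18 {V : Type*} {G : SimpleGraph V} {f : V → ℕ}
    (hf : ∀ ⦃u v⦄, G.Adj u v → f u ≤ f v + 1) {u v : V} (p : G.Walk u v) :
    f u ≤ f v + p.length := by
  induction p with
  | nil => simp
  | cons h _ ih => rw [length_cons]; have := hf h; omega

theorem SimpleGraph.Reachable.le_dist {V : Type*} {G : SimpleGraph V} {f : V → ℕ}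
    (hf : ∀ ⦃u v⦄, G.Adj u v → f u ≤ f v + 1) {u w : V} (hw : f w = 0)
    (h : G.Reachable u w) : f u ≤ G.dist u w := by
  obtain ⟨p, hp⟩ := h.exists_walk_length_eq_dist
  simpa [hw, hp] using p.le_add_length_s18 hf

open SimpleGraph Sum

section
variable {n m : ℕ} {C : Fin m → Finset (Fin n × Bool)}

lemma redGraph_adj_var (l : Fin n × Bool) : (redGraph C).Adj (inl l) (inr (inl l.1)) :=
  Or.inl rfl

lemma redGraph_adj_clause {l : Fin n × Bool} {j : Fin m} (h : l ∈ C j) :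
    (redGraph C).Adj (inl l) (inr (inr (inl j))) :=
  Or.inl h

lemma redGraph_adj_st (l : Fin n × Bool) (b : Bool) :
    (redGraph C).Adj (inl l) (inr (inr (inr b))) :=
  Or.inl trivial

lemma redGraph_exists_lit_adj (hn : 0 < n) (hC : ∀ j, (C j).Nonempty)
    (v : Fin n ⊕ (Fin m ⊕ Bool)) : ∃ l, (redGraph C).Adj (inl l) (inr v) := by
  rcases v with i | j | b
  · exact ⟨(i, true), redGraph_adj_var _⟩
  · obtain ⟨l, hl⟩ := hC j
    exact ⟨l, redGraph_adj_clause hl⟩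
  · exact ⟨(⟨0, hn⟩, true), redGraph_adj_st _ b⟩

lemma redGraph_connected (hn : 0 < n) (hC : ∀ j, (C j).Nonempty) :
    (redGraph C).Connected := by
  have hs : ∀ v, (redGraph C).Reachable v (inr (inr (inr false))) := by
    have hlit : ∀ l, (redGraph C).Reachable (inl l) (inr (inr (inr false))) :=
      fun l => (redGraph_adj_st l false).reachable
    rintro (l | v)
    · exact hlit l
    · obtain ⟨l, hl⟩ := redGraph_exists_lit_adj hn hC v
      exact hl.symm.reachable.trans (hlit l)
  exact connected_iff_exists_forall_reachable _ |>.2 ⟨_, fun v => (hs v).symm⟩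

lemma redGraph_dist_le_two {l : Fin n × Bool} {u v : RedVtx n m}
    (hu : (redGraph C).Adj (inl l) u) (hv : (redGraph C).Adj (inl l) v) :
    (redGraph C).dist u v ≤ 2 :=
  dist_le (.cons hu.symm (.cons hv .nil))

lemma redGraph_dist_lit_le_three (l : Fin n × Bool) {l' : Fin n × Bool} {v : RedVtx n m}
    (hv : (redGraph C).Adj (inl l') v) : (redGraph C).dist (inl l) v ≤ 3 :=
  dist_le (.cons (redGraph_adj_st l false) <| .cons (redGraph_adj_st l' false).symm <|
    .cons hv .nil)

lemma redGraph_dist_inr_le_four (hn : 0 < n) (hC : ∀ j, (C j).Nonempty)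
    (v w : Fin n ⊕ (Fin m ⊕ Bool)) : (redGraph C).dist (inr v) (inr w) ≤ 4 := by
  obtain ⟨l, hl⟩ := redGraph_exists_lit_adj hn hC v
  obtain ⟨l', hl'⟩ := redGraph_exists_lit_adj hn hC w
  exact dist_le (.cons hl.symm <| .cons (redGraph_adj_st l false) <|
    .cons (redGraph_adj_st l' false).symm <| .cons hl' .nil)

lemma redDelta_redW (q : RedIdx n m) : redDelta C q (redW q) = 0 := by
  rcases q with i | j | _ <;> simp [redDelta, redW]

lemma redDelta_le_succ_of_redE (q : RedIdx n m) {l : Fin n × Bool} {v : RedVtx n m}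
    (h : redE C (inl l) v) :
    redDelta C q (inl l) ≤ redDelta C q v + 1 ∧
      redDelta C q v ≤ redDelta C q (inl l) + 1 := by
  have hfst : ∀ {j}, l ∈ C j → l.1 ∈ (C j).image Prod.fst := Finset.mem_image_of_mem _
  have hinter : ∀ {j j'}, l ∈ C j → l ∈ C j' → (C j ∩ C j').Nonempty :=
    fun h h' => ⟨l, Finset.mem_inter.2 ⟨h, h'⟩⟩
  rcases q with i | j | _ <;> rcases v with l' | i' | j' | b <;>
    simp only [redE, redDelta] at h ⊢ <;> (try split_ifs) <;> grind

lemma redDelta_le_succ_of_adj (q : RedIdx n m) {u v : RedVtx n m}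
    (h : (redGraph C).Adj u v) : redDelta C q u ≤ redDelta C q v + 1 := by
  rcases h with h | h
  · rcases u with l | u
    · exact (redDelta_le_succ_of_redE q h).1
    · rcases v with _ | _ <;> simp [redE] at h
  · rcases v with l | v
    · exact (redDelta_le_succ_of_redE q h).2
    · rcases u with _ | _ <;> simp [redE] at h

lemma redGraph_dist_inl_redW_le (hC : ∀ j, (C j).Nonempty) (l : Fin n × Bool) (q : RedIdx n m) :
    (redGraph C).dist (inl l) (redW q) ≤ redDelta C q (inl l) := by
  rcases q with i | j | _ <;> simp only [redDelta, redW]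
  · split_ifs with h
    · exact (dist_eq_one_iff_adj.2 (h ▸ redGraph_adj_var l)).le
    · exact redGraph_dist_lit_le_three l (redGraph_adj_var (i, true))
  · split_ifs with h
    · exact (dist_eq_one_iff_adj.2 (redGraph_adj_clause h)).le
    · obtain ⟨l', hl'⟩ := hC j
      exact redGraph_dist_lit_le_three l (redGraph_adj_clause hl')
  · exact (dist_eq_one_iff_adj.2 (redGraph_adj_st l false)).le

lemma redGraph_dist_inr_redW_le (hn : 0 < n) (hC : ∀ j, (C j).Nonempty)
    (v : Fin n ⊕ (Fin m ⊕ Bool)) (q : RedIdx n m) :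
    (redGraph C).dist (inr v) (redW q) ≤ redDelta C q (inr v) := by
  have hfour := redGraph_dist_inr_le_four (C := C) hn hC v
  rcases q with i | j | _ <;> rcases v with p | k | b <;> simp only [redDelta, redW]
  · split_ifs with h
    · simp [h]
    · exact hfour _
  · split_ifs with h
    · obtain ⟨l, hl, rfl⟩ := Finset.mem_image.1 h
      exact redGraph_dist_le_two (redGraph_adj_clause hl) (redGraph_adj_var l)
    · exact hfour _
  · exact redGraph_dist_le_two (redGraph_adj_st (i, true) b) (redGraph_adj_var (i, true))
  · split_ifs with h
    · obtain ⟨l, hl, rfl⟩ := Finset.mem_image.1 h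
      exact redGraph_dist_le_two (redGraph_adj_var l) (redGraph_adj_clause hl)
    · exact hfour _
  · split_ifs with h h'
    · simp [h]
    · obtain ⟨l, hl⟩ := h'
      rw [Finset.mem_inter] at hl
      exact redGraph_dist_le_two (redGraph_adj_clause hl.2) (redGraph_adj_clause hl.1)
    · exact hfour _
  · obtain ⟨l, hl⟩ := hC j
    exact redGraph_dist_le_two (redGraph_adj_st l b) (redGraph_adj_clause hl)
  · exact redGraph_dist_le_two (redGraph_adj_var (p, true)) (redGraph_adj_st _ false)
  · obtain ⟨l, hl⟩ := hC k
    exact redGraph_dist_le_two (redGraph_adj_clause hl) (redGraph_adj_st l false)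
  · cases b
    · simp
    · exact redGraph_dist_le_two (redGraph_adj_st (⟨0, hn⟩, true) true)
        (redGraph_adj_st _ false)

end

theorem redGraph_realizes_general {n m : ℕ} (hn : 0 < n)
    (C : Fin m → Finset (Fin n × Bool))
    (hC : ∀ j, (C j).Nonempty ∧ (C j).card ≤ 3) :
    ∀ (u : RedVtx n m) (q : RedIdx n m),
      (redGraph C).dist u (redW q) = redDelta C q u := by
  intro u q
  have hne : ∀ j, (C j).Nonempty := fun j => (hC j).1
  refine le_antisymm ?_ ?_
  · rcases u with l | v
    · exact redGraph_dist_inl_redW_le hne l q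
    · exact redGraph_dist_inr_redW_le hn hne v q
  · exact ((redGraph_connected hn hne).preconnected u (redW q)).le_dist
      (fun _ _ => redDelta_le_succ_of_adj q) (redDelta_redW q)

/-- in the 3SAT reduction (with every clause having 1 to 3
literals and every variable sharing some clause with another variable), the
graph `G₀` realizes the constructed set `S` with resolving set
`W = {r_1,…,r_n, c_1,…,c_m, s}`: the distance in `G₀` from any vertex `u` to
each vertex of `W` equals the prescribed value `δ(·, u)`. -/
theorem redGraph_realizes {n m : ℕ} (hn : 0 < n)
    (C : Fin m → Finset (Fin n × Bool))
    (hC : ∀ j, (C j).Nonempty ∧ (C j).card ≤ 3)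
    (hvar : ∀ i : Fin n, ∃ (j : Fin m) (l l' : Fin n × Bool),
      l ∈ C j ∧ l' ∈ C j ∧ l.1 = i ∧ l'.1 ≠ i) :
    ∀ (u : RedVtx n m) (q : RedIdx n m),
      (redGraph C).dist u (redW q) = redDelta C q u :=
  redGraph_realizes_general hn C hC
end
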